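/- arXiv:2104.02583 — 10 statements merged into one kernel-verified Lean document; each statement's English description precedes it below -/
import Mathlib

section
/- Suppose the follower's initial velocity is v₀ = 0 and the initial gap is x_l0 − x₀ − l = ε with 0 < ε < s₀. Then the follower's initial acceleration equals v̇(0) = a·(1 − (s₀/ε)²) < 0; consequently there exists t* > 0 such that the solution satisfies v(t) < 0 for all t ∈ (0, t*]. -/
open MeasureTheory Set

/-- The IDM acceleration function. -/
noncomputable def IDMAcc (a b vfree τ s₀ l δ : ℝ) (x v xl vl : ℝ) : ℝ :=
  a * (1 - (|v| / vfree) ^ δ -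
    ((2 * Real.sqrt (a * b) * (s₀ + v * τ) + v * (v - vl)) /
      (2 * Real.sqrt (a * b) * (xl - x - l))) ^ 2)

/-- A solution of the IDM system on the time horizon `[0, T]`. -/
structure IDMSolution (a b vfree τ s₀ l δ T : ℝ) (ulead : ℝ → ℝ)
    (x₀ xl₀ v₀ vl₀ : ℝ) (x xl v vl : ℝ → ℝ) : Prop where
  init_x : x 0 = x₀
  init_xl : xl 0 = xl₀
  init_v : v 0 = v₀
  init_vl : vl 0 = vl₀
  gap_pos : ∀ t ∈ Icc (0:ℝ) T, 0 < xl t - x t - l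
  deriv_x : ∀ t ∈ Icc (0:ℝ) T, HasDerivAt x (v t) t
  deriv_xl : ∀ t ∈ Icc (0:ℝ) T, HasDerivAt xl (vl t) t
  eq_vl : ∀ t ∈ Icc (0:ℝ) T, vl t = vl₀ + ∫ s in (0:ℝ)..t, ulead s
  deriv_v : ∀ t ∈ Icc (0:ℝ) T,
    HasDerivAt v (IDMAcc a b vfree τ s₀ l δ (x t) (v t) (xl t) (vl t)) t

lemma neg_deriv_neg_on_right {v : ℝ → ℝ} {c : ℝ} (hv : HasDerivAt v c 0)
    (h0 : v 0 = 0) (hc : c < 0) : ∃ r > 0, ∀ t, 0 < t → t < r → v t < 0 := by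
  have h := hasDerivAt_iff_tendsto_slope.mp hv
  have hev : ∀ᶠ t in nhdsWithin 0 {(0:ℝ)}ᶜ, slope v 0 t < 0 :=
    h (Iio_mem_nhds hc)
  obtain ⟨r, hr, hball⟩ := Metric.mem_nhdsWithin_iff.mp hev
  refine ⟨r, hr, fun t ht htr => ?_⟩
  have hs := hball ⟨by
    rw [Metric.mem_ball, Real.dist_eq, sub_zero, abs_of_pos ht]; exact htr,
    by simp [ne_of_gt ht]⟩
  simp only [Set.mem_setOf_eq, slope_def_field, h0, sub_zero] at hs
  have := (div_neg_iff).mp hs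
  rcases this with ⟨h1, h2⟩ | ⟨h1, h2⟩
  · linarith
  · exact h1

/-- **Negative velocity.** If the follower starts at rest with initial gap
`x_l0 − x₀ − l = ε`, `0 < ε < s₀`, then its initial acceleration equals
`a (1 − (s₀/ε)²) < 0`, and consequently the velocity is negative on some
interval `(0, t*]`. -/
theorem idm_negative_velocity
    (T a b vfree s₀ l δ τ ε : ℝ) (ulead : ℝ → ℝ) (x₀ xl₀ vl₀ : ℝ)
    (x xl v vl : ℝ → ℝ)
    (hT : 0 < T) (ha : 0 < a) (hb : 0 < b) (hvf : 0 < vfree)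
    (hs₀ : 0 < s₀) (hl : 0 < l) (hτ : τ ∈ Ioo 0 T) (hδ : 1 < δ)
    (hε : 0 < ε) (hεs₀ : ε < s₀) (hgap₀ : xl₀ - x₀ - l = ε) (hvl₀ : 0 ≤ vl₀)
    (hsol : IDMSolution a b vfree τ s₀ l δ T ulead x₀ xl₀ 0 vl₀ x xl v vl) :
    IDMAcc a b vfree τ s₀ l δ x₀ 0 xl₀ vl₀ = a * (1 - (s₀ / ε) ^ 2) ∧
    a * (1 - (s₀ / ε) ^ 2) < 0 ∧
    ∃ tstar ∈ Ioc (0:ℝ) T, ∀ t ∈ Ioc (0:ℝ) tstar, v t < 0 := by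
  have hsq : (0:ℝ) < Real.sqrt (a * b) := Real.sqrt_pos.mpr (mul_pos ha hb)
  have hne : (2 * Real.sqrt (a * b)) ≠ 0 := by positivity
  have hAcc : IDMAcc a b vfree τ s₀ l δ x₀ 0 xl₀ vl₀ = a * (1 - (s₀ / ε) ^ 2) := by
    unfold IDMAcc
    rw [hgap₀]
    rw [abs_zero, zero_div, Real.zero_rpow (by linarith), zero_mul, add_zero,
      zero_mul, add_zero, mul_div_mul_left _ _ hne, sub_zero]
  have hratio : 1 < s₀ / ε := (one_lt_div hε).mpr hεs₀
  have hneg : a * (1 - (s₀ / ε) ^ 2) < 0 := by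
    have : 1 < (s₀ / ε) ^ 2 := by nlinarith
    nlinarith
  refine ⟨hAcc, hneg, ?_⟩
  have h0T : (0:ℝ) ∈ Icc (0:ℝ) T := ⟨le_refl _, le_of_lt hT⟩
  have hd := hsol.deriv_v 0 h0T
  rw [hsol.init_x, hsol.init_v, hsol.init_xl, hsol.init_vl, hAcc] at hd
  obtain ⟨r, hr, hv⟩ := neg_deriv_neg_on_right hd hsol.init_v hneg
  refine ⟨min (r / 2) T, ⟨lt_min (by linarith) hT, min_le_right _ _⟩, fun t ht => ?_⟩
  exact hv t ht.1 (lt_of_le_of_lt (ht.2.trans (min_le_left _ _)) (by linarith))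
end

section
/- Fix the parameters v_free = 1, a = 1, s₀ = 16, b = 1/4, τ = 8, δ = 4, and let the leader be stationary: x_l(t) ≡ x_l0, v_l(t) ≡ 0. Let the follower start at rest, v(0) = 0, at distance x(0) = x_l0 − l − ε with 0 < ε < 1, so that the follower's velocity satisfies v̇(t) = 1 − v(t)⁴ − ((4+v(t))²/(ε − ∫₀ᵗ v(s) ds))² as long as the solution exists. Then if the solution exists on [0,1], there exists t̄ ∈ [0,1] with v(t̄) < −1. -/
/-!
If `v ≥ -1` on `[0,1]`, the follower has moved back by at most `1`, so the gap
`ε - ∫₀ᵗ v` stays below `2`, while the numerator `(4 + v)²` is at least `9`. The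
interaction term then exceeds `(9/2)² = 81/4`, so `v̇ ≤ 1 - 81/4`, and the follower
would reach `v(1) ≤ -77/4 < -1`.
-/

open MeasureTheory Set

theorem mul_sub_le_intervalIntegral_of_le {f : ℝ → ℝ} {a b c : ℝ} (hab : a ≤ b)
    (hf : IntervalIntegrable f volume a b) (hc : ∀ x ∈ Icc a b, c ≤ f x) :
    c * (b - a) ≤ ∫ x in a..b, f x := by
  have := intervalIntegral.integral_mono_on hab intervalIntegrable_const hf hc
  simpa [mul_comm] using this

/-- The follower's IDM acceleration in this example at velocity `x` and gap `D`. -/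
noncomputable def idmAccel (x D : ℝ) : ℝ := 1 - x ^ 4 - ((4 + x) ^ 2 / D) ^ 2

theorem idmAccel_le {x D : ℝ} (hx : -1 ≤ x) (hD : 0 < D) (hD2 : D ≤ 2) :
    idmAccel x D ≤ -77 / 4 := by
  have hquot : 9 / 2 ≤ (4 + x) ^ 2 / D := by
    rw [le_div_iff₀ hD]
    nlinarith
  have hx4 : 0 ≤ x ^ 4 := by positivity
  unfold idmAccel
  nlinarith

theorem idm_velocity_below_neg_one_general
    (ε : ℝ) (hε1 : ε < 1) (v : ℝ → ℝ)
    (hv0 : v 0 = 0)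
    (hden : ∀ t ∈ Icc (0:ℝ) 1, 0 < ε - ∫ s in (0:ℝ)..t, v s)
    (hode : ∀ t ∈ Icc (0:ℝ) 1,
      HasDerivAt v
        (1 - (v t) ^ 4 - ((4 + v t) ^ 2 / (ε - ∫ s in (0:ℝ)..t, v s)) ^ 2) t) :
    ∃ tbar ∈ Icc (0:ℝ) 1, v tbar < -1 := by
  by_contra! hv
  have hcont : ContinuousOn v (Icc 0 1) := fun t ht => (hode t ht).continuousAt.continuousWithinAt
  have hgap : ∀ t ∈ Icc (0:ℝ) 1, ε - ∫ s in (0:ℝ)..t, v s ≤ 2 := fun t ht => by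
    have := mul_sub_le_intervalIntegral_of_le ht.1
      ((hcont.mono (Icc_subset_Icc le_rfl ht.2)).intervalIntegrable_of_Icc ht.1)
      (fun s hs => hv s ⟨hs.1, hs.2.trans ht.2⟩)
    linarith [ht.2]
  have hslope : ∀ t ∈ interior (Icc (0:ℝ) 1), deriv v t ≤ -77 / 4 := fun t ht => by
    have ht := interior_subset ht
    rw [(hode t ht).deriv]
    exact idmAccel_le (hv t ht) (hden t ht) (hgap t ht)
  have hdrop := (convex_Icc (0:ℝ) 1).image_sub_le_mul_sub_of_deriv_le hcont
    (fun t ht => (hode t (interior_subset ht)).differentiableAt.differentiableWithinAt) hslope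
    0 (left_mem_Icc.2 zero_le_one) 1 (right_mem_Icc.2 zero_le_one) zero_le_one
  linarith [hv 1 (right_mem_Icc.2 zero_le_one)]

/-- **Negative velocity below −1 for the concrete IDM example.**
With parameters `v_free = 1`, `a = 1`, `s₀ = 16`, `b = 1/4`, `τ = 8`, `δ = 4`,
a stationary leader and a follower starting at rest at distance `ε ∈ (0,1)`
behind the leader (gap `ε`), the follower's velocity satisfies
`v̇(t) = 1 − v(t)⁴ − ((4 + v(t))² / (ε − ∫₀ᵗ v(s) ds))²`.
If the solution exists on `[0,1]`, then `v(t̄) < −1` for some `t̄ ∈ [0,1]`. -/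
theorem idm_velocity_below_neg_one
    (ε : ℝ) (hε : 0 < ε) (hε1 : ε < 1) (v : ℝ → ℝ)
    (hv0 : v 0 = 0)
    (hden : ∀ t ∈ Icc (0:ℝ) 1, 0 < ε - ∫ s in (0:ℝ)..t, v s)
    (hode : ∀ t ∈ Icc (0:ℝ) 1,
      HasDerivAt v
        (1 - (v t) ^ 4 - ((4 + v t) ^ 2 / (ε - ∫ s in (0:ℝ)..t, v s)) ^ 2) t) :
    ∃ tbar ∈ Icc (0:ℝ) 1, v tbar < -1 :=
  idm_velocity_below_neg_one_general ε hε1 v hv0 hden hode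
end

section
/- Assume the follower starts at rest v₀ = 0, the leader's velocity is strictly positive, v_l(t) > 0 for all t ∈ [0,T], the parameters satisfy s₀/(1.01·τ) > v_free and δ > 1, and v_max > 0 is an upper bound for both vehicles' velocities on [0,T]. Then there exists ε̄ ∈ (0, s₀) such that for every initial gap x_l0 − x₀ − l = ε with 0 < ε < ε̄, any solution of the IDM system on [0,T] admits a time t** ∈ [0,T] with v(t**) < −v_free. -/
open MeasureTheory Set

private lemma deriv_le_bound {f f' : ℝ → ℝ} {p q B : ℝ} (hpq : p ≤ q)
    (hf : ∀ t ∈ Set.Icc p q, HasDerivAt f (f' t) t)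
    (hB : ∀ t ∈ Set.Icc p q, f' t ≤ B) :
    f q - f p ≤ B * (q - p) := by
  have h : MonotoneOn (fun t => B * t - f t) (Set.Icc p q) := by
    apply monotoneOn_of_deriv_nonneg (convex_Icc p q)
    · exact (continuousOn_const.mul continuousOn_id).sub
        (fun t ht => (hf t ht).continuousAt.continuousWithinAt)
    · intro t ht
      have ht' : t ∈ Set.Icc p q := interior_subset ht
      exact (((hasDerivAt_id t).const_mul B).sub (hf t ht')).differentiableAt.differentiableWithinAt
    · intro t ht
      have ht' : t ∈ Set.Icc p q := interior_subset ht
      have hd : HasDerivAt (fun u => B * u - f u) (B * 1 - f' t) t :=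
        ((hasDerivAt_id t).const_mul B).sub (hf t ht')
      rw [hd.deriv]
      nlinarith [hB t ht']
  have h2 := h (Set.left_mem_Icc.2 hpq) (Set.right_mem_Icc.2 hpq) hpq
  simp only at h2
  nlinarith [h2]

set_option maxHeartbeats 1000000 in
/-- **Sufficiently negative velocity in small time.**
If the follower starts at rest, the leader's velocity is strictly positive,
`s₀/(1.01 τ) > v_free`, `δ > 1`, and `v_max > 0` bounds both velocities, then
there is `ε̄ ∈ (0, s₀)` such that for every initial gap `ε ∈ (0, ε̄)` every
solution of the IDM on `[0,T]` reaches a velocity below `−v_free` at some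
time `t** ∈ [0,T]`. -/
theorem idm_velocity_below_neg_vfree
    (T a b vfree s₀ l δ τ vmax : ℝ)
    (hT : 0 < T) (ha : 0 < a) (hb : 0 < b) (hvf : 0 < vfree)
    (hs₀ : 0 < s₀) (hl : 0 < l) (hτ : τ ∈ Ioo 0 T) (hδ : 1 < δ)
    (hvmax : 0 < vmax) (hparam : vfree < s₀ / (1.01 * τ)) :
    ∃ εbar ∈ Ioo (0:ℝ) s₀,
      ∀ (ε x₀ xl₀ vl₀ : ℝ) (ulead : ℝ → ℝ) (x xl v vl : ℝ → ℝ),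
        0 < ε → ε < εbar → xl₀ - x₀ - l = ε → 0 ≤ vl₀ →
        IDMSolution a b vfree τ s₀ l δ T ulead x₀ xl₀ 0 vl₀ x xl v vl →
        (∀ t ∈ Icc (0:ℝ) T, 0 < vl t) →
        (∀ t ∈ Icc (0:ℝ) T, v t ≤ vmax ∧ vl t ≤ vmax) →
        ∃ tss ∈ Icc (0:ℝ) T, v tss < -vfree := by
  have hτ0 : 0 < τ := hτ.1
  set c₀ : ℝ := s₀ / 101 with hc₀def
  have hc₀ : 0 < c₀ := by positivity
  set C : ℝ := vmax + vfree with hCdef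
  have hC : 0 < C := by positivity
  have hs : 0 < Real.sqrt (a * b) := Real.sqrt_pos.2 (by positivity)
  set Δ : ℝ := min T (min (Real.sqrt (a * b) * c₀ / (a * vmax))
      (a * c₀ ^ 2 / (16 * C ^ 2 * (vfree + a * T + 1)))) with hΔdef
  have hΔpos : 0 < Δ := lt_min hT (lt_min (by positivity) (by positivity))
  have hΔT : Δ ≤ T := min_le_left _ _
  have hΔ1 : a * Δ * vmax ≤ Real.sqrt (a * b) * c₀ := by
    have h1 : Δ ≤ Real.sqrt (a * b) * c₀ / (a * vmax) :=
      le_trans (min_le_right _ _) (min_le_left _ _)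
    rw [le_div_iff₀ (by positivity)] at h1
    nlinarith
  have hΔ2 : (vfree + a * T + 1) * Δ ≤ a * c₀ ^ 2 / (16 * C ^ 2) := by
    have h1 : Δ ≤ a * c₀ ^ 2 / (16 * C ^ 2 * (vfree + a * T + 1)) :=
      le_trans (min_le_right _ _) (min_le_right _ _)
    rw [le_div_iff₀ (by positivity)] at h1
    rw [le_div_iff₀ (by positivity)]
    nlinarith
  clear_value Δ
  clear_value c₀
  clear_value C
  refine ⟨min (s₀ / 2) (C * Δ),
    ⟨lt_min (by positivity) (by positivity),
      lt_of_le_of_lt (min_le_left _ _) (by linarith)⟩, ?_⟩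
  intro ε x₀ xl₀ vl₀ ulead x xl v vl hε hεlt hgap hvl0 sol hvlpos hbnd
  by_contra hcon
  push_neg at hcon
  -- `hcon : ∀ t ∈ Icc 0 T, -vfree ≤ v t`
  have hrpow : ∀ t : ℝ, (0:ℝ) ≤ (|v t| / vfree) ^ δ :=
    fun t => Real.rpow_nonneg (div_nonneg (abs_nonneg _) hvf.le) δ
  -- the acceleration is bounded above by `a`
  have hAccA : ∀ t ∈ Icc (0:ℝ) T,
      IDMAcc a b vfree τ s₀ l δ (x t) (v t) (xl t) (vl t) ≤ a := by
    intro t ht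
    unfold IDMAcc
    nlinarith [hrpow t, sq_nonneg ((2 * Real.sqrt (a * b) * (s₀ + v t * τ) +
      v t * (v t - vl t)) / (2 * Real.sqrt (a * b) * (xl t - x t - l)))]
  -- hence `v t ≤ a t`
  have hvle : ∀ t ∈ Icc (0:ℝ) T, v t ≤ a * t := by
    intro t ht
    have h1 := deriv_le_bound (f := v)
      (f' := fun u => IDMAcc a b vfree τ s₀ l δ (x u) (v u) (xl u) (vl u))
      (p := 0) (q := t) (B := a) ht.1
      (fun u hu => sol.deriv_v u ⟨hu.1, le_trans hu.2 ht.2⟩)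
      (fun u hu => hAccA u ⟨hu.1, le_trans hu.2 ht.2⟩)
    rw [sol.init_v] at h1
    linarith
  -- the gap grows at most linearly
  have hgapub : ∀ t ∈ Icc (0:ℝ) Δ, xl t - x t - l ≤ 2 * C * Δ := by
    intro t ht
    have htT : t ≤ T := le_trans ht.2 hΔT
    have h1 : (xl t - x t - l) - (xl 0 - x 0 - l) ≤ C * (t - 0) := by
      refine deriv_le_bound (f := fun u => xl u - x u - l)
        (f' := fun u => vl u - v u) (p := 0) (q := t) (B := C) ht.1
        (fun u hu => ((sol.deriv_xl u ⟨hu.1, le_trans hu.2 htT⟩).sub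
          (sol.deriv_x u ⟨hu.1, le_trans hu.2 htT⟩)).sub_const l) ?_
      intro u hu
      have huT : u ∈ Icc (0:ℝ) T := ⟨hu.1, le_trans hu.2 htT⟩
      have h2 := (hbnd u huT).2
      have h3 := hcon u huT
      simp only [hCdef]
      linarith
    rw [sol.init_xl, sol.init_x, hgap] at h1
    have hεC : ε ≤ C * Δ := le_trans hεlt.le (min_le_right _ _)
    have hCt : C * t ≤ C * Δ := mul_le_mul_of_nonneg_left ht.2 hC.le
    linarith
  -- the key acceleration bound on `[0, Δ]`
  have hkey : ∀ t ∈ Icc (0:ℝ) Δ, IDMAcc a b vfree τ s₀ l δ (x t) (v t) (xl t) (vl t)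
      ≤ a - a * c₀ ^ 2 / (4 * (2 * C * Δ) ^ 2) := by
    intro t ht
    have htT : t ∈ Icc (0:ℝ) T := ⟨ht.1, le_trans ht.2 hΔT⟩
    have hgpos : 0 < xl t - x t - l := sol.gap_pos t htT
    have hgle : xl t - x t - l ≤ 2 * C * Δ := hgapub t ht
    have hvub : v t ≤ a * Δ :=
      le_trans (hvle t htT) (mul_le_mul_of_nonneg_left ht.2 ha.le)
    have hvlb : -vfree ≤ v t := hcon t htT
    have hvlub : vl t ≤ vmax := (hbnd t htT).2
    have hvlpos' : 0 < vl t := hvlpos t htT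
    have hτs : vfree * (1.01 * τ) < s₀ := (lt_div_iff₀ (by positivity)).1 hparam
    -- lower bound for the numerator
    have hN : Real.sqrt (a * b) * c₀ ≤
        2 * Real.sqrt (a * b) * (s₀ + v t * τ) + v t * (v t - vl t) := by
      rcases le_or_gt 0 (v t) with hw | hw
      · have h1 : s₀ ≤ s₀ + v t * τ := by nlinarith
        have h2 : -(a * Δ * vmax) ≤ v t * (v t - vl t) := by
          nlinarith [sq_nonneg (v t), mul_le_mul hvub hvlub hvlpos'.le (by positivity)]
        have hc₀s₀ : c₀ ≤ s₀ := by rw [hc₀def]; nlinarith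
        nlinarith [mul_le_mul_of_nonneg_left h1
            (by positivity : (0:ℝ) ≤ 2 * Real.sqrt (a * b)),
          mul_le_mul_of_nonneg_left hc₀s₀ hs.le]
      · have h1 : c₀ ≤ s₀ + v t * τ := by
          rw [hc₀def]
          have h4 : -vfree * τ ≤ v t * τ := mul_le_mul_of_nonneg_right hvlb hτ0.le
          linarith
        have h2 : 0 ≤ v t * (v t - vl t) := by nlinarith
        nlinarith [mul_le_mul_of_nonneg_left h1
          (by positivity : (0:ℝ) ≤ 2 * Real.sqrt (a * b))]
    -- lower bound for the fraction
    have hfrac : c₀ / (2 * (2 * C * Δ)) ≤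
        (2 * Real.sqrt (a * b) * (s₀ + v t * τ) + v t * (v t - vl t)) /
          (2 * Real.sqrt (a * b) * (xl t - x t - l)) := by
      rw [div_le_div_iff₀ (by positivity) (by positivity)]
      nlinarith [mul_le_mul_of_nonneg_left hgle (by positivity : (0:ℝ) ≤ 2 * Real.sqrt (a * b) * c₀),
        mul_le_mul_of_nonneg_right hN (by positivity : (0:ℝ) ≤ 2 * (2 * C * Δ))]
    have hsq : c₀ ^ 2 / (4 * (2 * C * Δ) ^ 2) ≤
        ((2 * Real.sqrt (a * b) * (s₀ + v t * τ) + v t * (v t - vl t)) /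
          (2 * Real.sqrt (a * b) * (xl t - x t - l))) ^ 2 := by
      have h0 : (0:ℝ) ≤ c₀ / (2 * (2 * C * Δ)) := by positivity
      have h1 := pow_le_pow_left₀ h0 hfrac 2
      have h2 : (c₀ / (2 * (2 * C * Δ))) ^ 2 = c₀ ^ 2 / (4 * (2 * C * Δ) ^ 2) := by
        rw [div_pow]; ring_nf
      linarith [h1, h2.le, h2.ge]
    unfold IDMAcc
    have h6 : a - a * c₀ ^ 2 / (4 * (2 * C * Δ) ^ 2)
        = a * (1 - c₀ ^ 2 / (4 * (2 * C * Δ) ^ 2)) := by ring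
    rw [h6]
    apply mul_le_mul_of_nonneg_left _ ha.le
    linarith [hrpow t, hsq]
  -- conclude from the mean value bound on `[0, Δ]`
  have hfinal : v Δ - v 0 ≤ (a - a * c₀ ^ 2 / (4 * (2 * C * Δ) ^ 2)) * (Δ - 0) :=
    deriv_le_bound (f := v)
      (f' := fun u => IDMAcc a b vfree τ s₀ l δ (x u) (v u) (xl u) (vl u))
      hΔpos.le (fun u hu => sol.deriv_v u ⟨hu.1, le_trans hu.2 hΔT⟩) hkey
  rw [sol.init_v] at hfinal
  have hC0 : C ≠ 0 := ne_of_gt hC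
  have hΔ0 : Δ ≠ 0 := ne_of_gt hΔpos
  have hq : a * c₀ ^ 2 / (4 * (2 * C * Δ) ^ 2) * Δ = a * c₀ ^ 2 / (16 * C ^ 2) / Δ := by
    field_simp
    ring
  have h16 : vfree + a * T + 1 ≤ a * c₀ ^ 2 / (16 * C ^ 2) / Δ := by
    rw [le_div_iff₀ hΔpos]
    exact hΔ2
  have haΔ : a * Δ ≤ a * T := mul_le_mul_of_nonneg_left hΔT ha.le
  have hcd : v Δ < -vfree := by nlinarith [hfinal, hq, h16, haΔ]
  exact absurd hcd (not_lt.2 (hcon Δ ⟨hΔpos.le, hΔT⟩))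
end

section
/- Let δ > 1 and suppose a solution of the IDM system satisfies v(t**) < −v_free at some time t**. Then v is strictly decreasing as long as it stays below −v_free, and the solution ceases to exist in finite time: there exists a finite time t₁ > t** such that lim_{t→t₁⁻} v(t) = −∞. In particular, v cannot be extended to [t**, ∞): if it could, then since v̇(t) ≤ a·(1 − (|v(t)|/v_free)^δ) whenever v(t) < −v_free, the change of variables y = −v(s) would force ∫_{v_free+η}^{∞} dy/((y/v_free)^δ − 1) = ∞ for η = −v(t**) − v_free > 0, contradicting the finiteness of this integral for δ > 1. -/
open Set

/-!
Only the free-flow part of the IDM acceleration matters: the interaction term enters squared,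
so `v̇ ≤ a (1 - (|v| / v_free) ^ δ)`, which is negative below `-v_free`. Hence `v` never climbs
back above `v(t**)`, and `u = -v ≥ u₀ := -v(t**) > v_free` satisfies `u̇ ≥ K u ^ δ` with
`K = a (v_free ^ (-δ) - u₀ ^ (-δ)) > 0`. For `δ > 1` this forces
`u ^ (1 - δ)` to decrease at rate at least `(δ - 1) K`, yet it stays positive: impossible on an
unbounded time interval.
-/

lemma IDMAcc_le_free_flow {a : ℝ} (ha : 0 ≤ a) (b vfree τ s₀ l δ x v xl vl : ℝ) :
    IDMAcc a b vfree τ s₀ l δ x v xl vl ≤ a * (1 - (|v| / vfree) ^ δ) := by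
  unfold IDMAcc
  exact mul_le_mul_of_nonneg_left (sub_le_self _ (sq_nonneg _)) ha

lemma IDMAcc_neg_of_lt_neg {a vfree δ v : ℝ} (ha : 0 < a) (hvf : 0 < vfree) (hδ : 0 < δ)
    (hv : v < -vfree) (b τ s₀ l x xl vl : ℝ) : IDMAcc a b vfree τ s₀ l δ x v xl vl < 0 := by
  have hratio : 1 < |v| / vfree := by
    rw [one_lt_div hvf, abs_of_neg (by linarith)]
    linarith
  have hpow : 1 < (|v| / vfree) ^ δ := Real.one_lt_rpow hratio hδ
  have hfree : a * (1 - (|v| / vfree) ^ δ) < 0 := mul_neg_of_pos_of_neg ha (by linarith)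
  exact (IDMAcc_le_free_flow ha.le b vfree τ s₀ l δ x v xl vl).trans_lt hfree

lemma free_flow_le_neg_mul_rpow {a F u₀ u δ : ℝ} (ha : 0 ≤ a) (hF : 0 < F) (hu₀ : 0 < u₀)
    (hδ : 0 ≤ δ) (hu : u₀ ≤ u) :
    a * (1 - (u / F) ^ δ) ≤ -(a * (1 / F ^ δ - 1 / u₀ ^ δ)) * u ^ δ := by
  have hFδ : 0 < F ^ δ := Real.rpow_pos_of_pos hF δ
  have hu₀δ : 0 < u₀ ^ δ := Real.rpow_pos_of_pos hu₀ δ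
  have hmono : u₀ ^ δ ≤ u ^ δ := Real.rpow_le_rpow hu₀.le hu hδ
  have hone : 1 ≤ u ^ δ / u₀ ^ δ := (one_le_div hu₀δ).mpr hmono
  rw [Real.div_rpow (hu₀.le.trans hu) hF.le]
  have hdiff : -(a * (1 / F ^ δ - 1 / u₀ ^ δ)) * u ^ δ - a * (1 - u ^ δ / F ^ δ)
      = a * (u ^ δ / u₀ ^ δ - 1) := by
    field_simp
    ring
  linarith [mul_nonneg ha (sub_nonneg.mpr hone)]

lemma image_le_of_deriv_neg_at_level {f f' : ℝ → ℝ} {t₀ c : ℝ}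
    (hf : ∀ t ∈ Ici t₀, HasDerivAt f (f' t) t) (h₀ : f t₀ ≤ c)
    (hlevel : ∀ t ∈ Ici t₀, f t = c → f' t < 0) {t : ℝ} (ht : t ∈ Ici t₀) : f t ≤ c :=
  image_le_of_deriv_right_lt_deriv_boundary' (B := fun _ => c) (B' := 0)
    (fun s hs => (hf s hs.1).continuousAt.continuousWithinAt)
    (fun s hs => (hf s hs.1).hasDerivWithinAt) h₀ continuousOn_const
    (fun _ _ => hasDerivWithinAt_const _ _ _) (fun s hs => hlevel s hs.1) ⟨ht, le_rfl⟩

section RpowGrowth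

variable {u u' : ℝ → ℝ} {t₀ K δ : ℝ}

lemma rpow_one_sub_sub_le_of_rpow_le_deriv (hδ : 1 < δ) (hu : ∀ t ∈ Ici t₀, 0 < u t)
    (hderiv : ∀ t ∈ Ici t₀, HasDerivAt u (u' t) t)
    (hgrowth : ∀ t ∈ Ici t₀, K * u t ^ δ ≤ u' t) {t : ℝ} (ht : t ∈ Ici t₀) :
    u t ^ (1 - δ) - u t₀ ^ (1 - δ) ≤ -((δ - 1) * K) * (t - t₀) := by
  have hpow : ∀ s ∈ Ici t₀,
      HasDerivAt (fun r => u r ^ (1 - δ)) (u' s * (1 - δ) * u s ^ (1 - δ - 1)) s :=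
    fun s hs => (hderiv s hs).rpow_const (Or.inl (hu s hs).ne')
  refine (convex_Ici t₀).image_sub_le_mul_sub_of_deriv_le
    (fun s hs => (hpow s hs).continuousAt.continuousWithinAt)
    (fun s hs => (hpow s (interior_subset hs)).differentiableAt.differentiableWithinAt)
    (fun s hs => ?_) t₀ self_mem_Ici t ht ht
  have hs : s ∈ Ici t₀ := interior_subset hs
  have hus := hu s hs
  have hneg : u s ^ (1 - δ - 1) = (u s ^ δ)⁻¹ := by
    rw [show 1 - δ - 1 = -δ by ring, Real.rpow_neg hus.le]
  have hK : K ≤ u' s * (u s ^ δ)⁻¹ :=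
    (le_mul_inv_iff₀ (Real.rpow_pos_of_pos hus δ)).mpr (hgrowth s hs)
  rw [(hpow s hs).deriv, hneg]
  nlinarith

theorem not_forall_pos_of_rpow_le_deriv (hδ : 1 < δ) (hK : 0 < K)
    (hu : ∀ t ∈ Ici t₀, 0 < u t) (hderiv : ∀ t ∈ Ici t₀, HasDerivAt u (u' t) t)
    (hgrowth : ∀ t ∈ Ici t₀, K * u t ^ δ ≤ u' t) : False := by
  have hrate : 0 < (δ - 1) * K := mul_pos (by linarith) hK
  set T := t₀ + u t₀ ^ (1 - δ) / ((δ - 1) * K)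
  have hT : T ∈ Ici t₀ :=
    le_add_of_nonneg_right (div_nonneg (Real.rpow_pos_of_pos (hu t₀ self_mem_Ici) _).le hrate.le)
  have hdecay := rpow_one_sub_sub_le_of_rpow_le_deriv hδ hu hderiv hgrowth hT
  have hpos : 0 < u T ^ (1 - δ) := Real.rpow_pos_of_pos (hu T hT) _
  have helapsed : (δ - 1) * K * (T - t₀) = u t₀ ^ (1 - δ) := by
    simp only [T, add_sub_cancel_left]
    field_simp [(sub_pos.mpr hδ).ne']
  linarith

end RpowGrowth

theorem idm_blow_down_finite_time_general
    (a b vfree s₀ l δ τ tss : ℝ)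
    (ha : 0 < a) (hvf : 0 < vfree)
    (hδ : 1 < δ)
    (x v xl vl : ℝ → ℝ)
    (hv : ∀ t, tss ≤ t →
      HasDerivAt v (IDMAcc a b vfree τ s₀ l δ (x t) (v t) (xl t) (vl t)) t)
    (hvss : v tss < -vfree) :
    False := by
  set A := fun t => IDMAcc a b vfree τ s₀ l δ (x t) (v t) (xl t) (vl t)
  have hδ₀ : 0 < δ := zero_lt_one.trans hδ
  have hv_le : ∀ t ∈ Ici tss, v t ≤ v tss :=
    fun t ht => image_le_of_deriv_neg_at_level hv le_rfl
      (fun s _ hs => IDMAcc_neg_of_lt_neg ha hvf hδ₀ (hs ▸ hvss) ..) ht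
  have hu₀ : 0 < -v tss := by linarith
  set K := a * (1 / vfree ^ δ - 1 / (-v tss) ^ δ)
  have hK : 0 < K := by
    refine mul_pos ha (sub_pos.mpr (one_div_lt_one_div_of_lt (Real.rpow_pos_of_pos hvf δ) ?_))
    exact Real.rpow_lt_rpow hvf.le (by linarith) hδ₀
  have hgrowth : ∀ t ∈ Ici tss, K * (-v t) ^ δ ≤ -A t := by
    intro t ht
    have hfree := free_flow_le_neg_mul_rpow ha.le hvf hu₀ hδ₀.le (neg_le_neg (hv_le t ht))
    have hacc : A t ≤ a * (1 - (|v t| / vfree) ^ δ) := IDMAcc_le_free_flow ha.le ..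
    rw [abs_of_neg (show v t < 0 by linarith [hv_le t ht])] at hacc
    linarith
  exact not_forall_pos_of_rpow_le_deriv (u := fun t => -v t) hδ hK
    (fun t ht => by linarith [hv_le t ht]) (fun t ht => (hv t ht).neg) hgrowth

/-- **Blow-down of the velocity in finite time.**
Let `δ > 1` and suppose the follower's velocity satisfies `v(t**) < −v_free`
at some time `t**`. Then the solution cannot be extended to all of
`[t**, ∞)`: assuming the follower solves the IDM dynamics (against a leader
with nonnegative velocity, with positive gap) at every time `t ≥ t**`
leads to a contradiction, i.e. the solution ceases to exist (the velocity
diverges to `−∞`) in finite time. -/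
theorem idm_blow_down_finite_time
    (a b vfree s₀ l δ τ tss : ℝ)
    (ha : 0 < a) (hb : 0 < b) (hvf : 0 < vfree) (hs₀ : 0 < s₀) (hl : 0 < l)
    (hτ : 0 < τ) (hδ : 1 < δ)
    (x v xl vl : ℝ → ℝ)
    (hvl_nonneg : ∀ t, tss ≤ t → 0 ≤ vl t)
    (hgap : ∀ t, tss ≤ t → 0 < xl t - x t - l)
    (hx : ∀ t, tss ≤ t → HasDerivAt x (v t) t)
    (hv : ∀ t, tss ≤ t →
      HasDerivAt v (IDMAcc a b vfree τ s₀ l δ (x t) (v t) (xl t) (vl t)) t)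
    (hvss : v tss < -vfree) :
    False :=
  idm_blow_down_finite_time_general a b vfree s₀ l δ τ tss ha hvf hδ x v xl vl hv hvss
end

section
/- Suppose the leader follows the free-flow dynamics v̇_l(t) = a·(1 − (v_l(t)/v_free)^δ) with δ > 0 even, and the initial data satisfy v₀ > v_l0 > 0 and x_l0 − x₀ − l = s₀. If the solution of the IDM system exists on [0,T] with T ≥ (v₀ − v_l0 + 1)/a, then there exists a time t₁ ∈ [0,T] such that v(t₁) = v_l(t₁). -/
open Set

/-- **Follower's velocity reaching the leader's velocity.**
Suppose the leader follows the free-flow dynamics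
`v̇_l = a (1 − (v_l/v_free)^δ)` with `δ > 0` even, `v₀ > v_l0 > 0` and initial
gap `x_l0 − x₀ − l = s₀`. If the solution exists on `[0,T]` with
`T ≥ (v₀ − v_l0 + 1)/a`, then the velocities equalize at some `t₁ ∈ [0,T]`. -/
theorem idm_velocities_equalize
    (T a b vfree s₀ l τ : ℝ) (δ : ℕ)
    (x₀ xl₀ v₀ vl₀ : ℝ) (x xl v vl : ℝ → ℝ)
    (hT : 0 < T) (ha : 0 < a) (hb : 0 < b) (hvf : 0 < vfree)
    (hs₀ : 0 < s₀) (hl : 0 < l) (hτ : τ ∈ Ioo 0 T)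
    (hδpos : 0 < δ) (hδeven : Even δ)
    (hv₀ : vl₀ < v₀) (hvl₀ : 0 < vl₀) (hgap₀ : xl₀ - x₀ - l = s₀)
    (hTlarge : (v₀ - vl₀ + 1) / a ≤ T)
    (hx0 : x 0 = x₀) (hxl0 : xl 0 = xl₀) (hv0 : v 0 = v₀) (hvl0 : vl 0 = vl₀)
    (hgap : ∀ t ∈ Icc (0:ℝ) T, 0 < xl t - x t - l)
    (hx : ∀ t ∈ Icc (0:ℝ) T, HasDerivAt x (v t) t)
    (hxl : ∀ t ∈ Icc (0:ℝ) T, HasDerivAt xl (vl t) t)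
    (hvl : ∀ t ∈ Icc (0:ℝ) T,
      HasDerivAt vl (a * (1 - (vl t / vfree) ^ δ)) t)
    (hv : ∀ t ∈ Icc (0:ℝ) T,
      HasDerivAt v
        (IDMAcc a b vfree τ s₀ l (δ : ℝ) (x t) (v t) (xl t) (vl t)) t) :
    ∃ t₁ ∈ Icc (0:ℝ) T, v t₁ = vl t₁ := by
  by_contra hcon
  push_neg at hcon
  have h0T : (0:ℝ) ∈ Icc (0:ℝ) T := ⟨le_refl _, hT.le⟩
  -- continuity
  have hvlcont : ContinuousOn vl (Icc 0 T) :=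
    fun t ht => ((hvl t ht).continuousAt).continuousWithinAt
  have hvcont : ContinuousOn v (Icc 0 T) :=
    fun t ht => ((hv t ht).continuousAt).continuousWithinAt
  -- v > vl throughout
  have hpos : ∀ t ∈ Icc (0:ℝ) T, vl t < v t := by
    intro t ht
    by_contra hle
    push_neg at hle
    have hsub : Icc (0:ℝ) t ⊆ Icc 0 T := Icc_subset_Icc le_rfl ht.2
    have hc : ContinuousOn (fun s => v s - vl s) (Icc 0 t) :=
      (hvcont.mono hsub).sub (hvlcont.mono hsub)
    have := intermediate_value_Icc' ht.1 hc
    have h0mem : (0:ℝ) ∈ Icc (v t - vl t) (v 0 - vl 0) := by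
      constructor
      · linarith
      · rw [hv0, hvl0]; linarith
    obtain ⟨s, hs, hs0⟩ := this h0mem
    exact hcon s (hsub hs) (by linarith [hs0, sub_eq_zero.mp hs0]; )
  -- vl > 0 throughout
  have hvlpos : ∀ t ∈ Icc (0:ℝ) T, 0 < vl t := by
    by_contra hle
    push_neg at hle
    set S : Set ℝ := Icc (0:ℝ) T ∩ vl ⁻¹' Iic 0 with hS
    have hSne : S.Nonempty := by
      obtain ⟨t, ht, htle⟩ := hle
      exact ⟨t, ht, htle⟩
    have hSclosed : IsClosed S :=
      hvlcont.preimage_isClosed_of_isClosed isClosed_Icc isClosed_Iic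
    have hSbdd : BddBelow S := ⟨0, fun s hs => hs.1.1⟩
    set t₀ := sInf S with ht₀
    have ht₀S : t₀ ∈ S := hSclosed.csInf_mem hSne hSbdd
    have ht₀Icc : t₀ ∈ Icc (0:ℝ) T := ht₀S.1
    have ht₀pos : 0 < t₀ := by
      rcases lt_or_eq_of_le ht₀Icc.1 with h | h
      · exact h
      · exfalso; have := ht₀S.2; rw [← h] at this
        simp only [mem_preimage, mem_Iic] at this
        rw [hvl0] at this; linarith
    -- vl t₀ = 0
    have hvlt₀ : vl t₀ = 0 := by
      have hle0 : vl t₀ ≤ 0 := ht₀S.2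
      have hsub : Icc (0:ℝ) t₀ ⊆ Icc 0 T := Icc_subset_Icc le_rfl ht₀Icc.2
      have hc : ContinuousOn vl (Icc 0 t₀) := hvlcont.mono hsub
      have h0mem : (0:ℝ) ∈ Icc (vl t₀) (vl 0) := ⟨hle0, by rw [hvl0]; linarith⟩
      obtain ⟨s, hs, hs0⟩ := intermediate_value_Icc' ht₀Icc.1 hc h0mem
      have hsS : s ∈ S := ⟨hsub hs, by simp [hs0]⟩
      have : t₀ ≤ s := csInf_le hSbdd hsS
      have : s = t₀ := le_antisymm hs.2 this
      rw [← this, hs0]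
    -- derivative at t₀ is a > 0
    have hderiv : HasDerivAt vl a t₀ := by
      have := hvl t₀ ht₀Icc
      rw [hvlt₀] at this
      simpa [zero_pow hδpos.ne'] using this
    have hslope := hasDerivAt_iff_tendsto_slope.mp hderiv
    have hslope' : Filter.Tendsto (slope vl t₀) (nhdsWithin t₀ (Iio t₀)) (nhds a) :=
      hslope.mono_left (nhdsWithin_mono _ (fun s hs => ne_of_lt hs))
    have hev : ∀ᶠ s in nhdsWithin t₀ (Iio t₀), 0 < slope vl t₀ s :=
      hslope'.eventually (eventually_gt_nhds ha)
    have hev2 : ∀ᶠ s in nhdsWithin t₀ (Iio t₀), 0 < s :=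
      eventually_nhdsWithin_of_eventually_nhds (eventually_gt_nhds ht₀pos)
    obtain ⟨s, ⟨⟨hsl0, hspos⟩, hs3⟩⟩ :=
      ((hev.and hev2).and self_mem_nhdsWithin).exists
    have hslt : s < t₀ := hs3
    have : vl s < vl t₀ := by
      have hsl := hsl0
      rw [slope_def_field] at hsl
      have hne : s - t₀ < 0 := by linarith
      rcases lt_trichotomy (vl s) (vl t₀) with h | h | h
      · exact h
      · exfalso; rw [h] at hsl; simp at hsl
      · exfalso
        have : (vl s - vl t₀) / (s - t₀) < 0 := div_neg_of_pos_of_neg (by linarith) hne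
        linarith
    have hsS : s ∈ S := ⟨⟨hspos.le, hslt.le.trans ht₀Icc.2⟩, by
      simp only [mem_preimage, mem_Iic]; linarith [hvlt₀]⟩
    exact absurd (csInf_le hSbdd hsS) (not_le.mpr hslt)
  -- gap is antitone, hence ≤ s₀
  have hgaple : ∀ t ∈ Icc (0:ℝ) T, xl t - x t - l ≤ s₀ := by
    have hG : ∀ t ∈ Icc (0:ℝ) T, HasDerivAt (fun s => xl s - x s) (vl t - v t) t :=
      fun t ht => (hxl t ht).sub (hx t ht)
    have hanti : AntitoneOn (fun s => xl s - x s) (Icc 0 T) := by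
      apply antitoneOn_of_deriv_nonpos (convex_Icc 0 T)
      · exact fun t ht => ((hG t ht).continuousAt).continuousWithinAt
      · intro t ht
        rw [interior_Icc] at ht
        exact ((hG t (Ioo_subset_Icc_self ht)).differentiableAt).differentiableWithinAt
      · intro t ht
        rw [interior_Icc] at ht
        have ht' := Ioo_subset_Icc_self ht
        rw [(hG t ht').deriv]
        linarith [hpos t ht']
    intro t ht
    have := hanti h0T ht ht.1
    simp only [hx0, hxl0] at this
    linarith
  -- main decrease argument: F = v - vl + a*t is antitone
  have hFanti : AntitoneOn (fun s => v s - vl s + a * s) (Icc 0 T) := by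
    have hF : ∀ t ∈ Icc (0:ℝ) T, HasDerivAt (fun s => v s - vl s + a * s)
        (IDMAcc a b vfree τ s₀ l (δ : ℝ) (x t) (v t) (xl t) (vl t)
          - a * (1 - (vl t / vfree) ^ δ) + a) t := by
      intro t ht
      exact ((hv t ht).sub (hvl t ht)).add (by simpa using (hasDerivAt_id t).const_mul a)
    apply antitoneOn_of_deriv_nonpos (convex_Icc 0 T)
    · exact fun t ht => ((hF t ht).continuousAt).continuousWithinAt
    · intro t ht
      rw [interior_Icc] at ht
      exact ((hF t (Ioo_subset_Icc_self ht)).differentiableAt).differentiableWithinAt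
    · intro t ht
      rw [interior_Icc] at ht
      have ht' := Ioo_subset_Icc_self ht
      rw [(hF t ht').deriv]
      simp only [IDMAcc]
      have hw : 0 < vl t := hvlpos t ht'
      have hvw : vl t < v t := hpos t ht'
      have hg : 0 < xl t - x t - l := hgap t ht'
      have hgs : xl t - x t - l ≤ s₀ := hgaple t ht'
      have hab : 0 < Real.sqrt (a * b) := Real.sqrt_pos.mpr (mul_pos ha hb)
      have habs : |v t| = v t := abs_of_pos (hw.trans hvw)
      set N := 2 * Real.sqrt (a * b) * (s₀ + v t * τ) + v t * (v t - vl t) with hN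
      set D := 2 * Real.sqrt (a * b) * (xl t - x t - l) with hD
      have hDpos : 0 < D := by positivity
      have hND : D ≤ N := by
        have h1 : 0 ≤ v t * τ := mul_nonneg (hw.trans hvw).le hτ.1.le
        have h2 : 0 ≤ v t * (v t - vl t) :=
          mul_nonneg (hw.trans hvw).le (by linarith)
        have : 2 * Real.sqrt (a * b) * (xl t - x t - l) ≤ 2 * Real.sqrt (a * b) * s₀ := by
          nlinarith
        nlinarith
      have hQ : 1 ≤ (N / D) ^ 2 := by
        have h1 : (1:ℝ) ≤ N / D := (one_le_div hDpos).mpr hND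
        nlinarith
      have hpow : (vl t / vfree) ^ δ ≤ (|v t| / vfree) ^ ((δ:ℕ):ℝ) := by
        rw [Real.rpow_natCast, habs]
        gcongr
      have key : (vl t / vfree) ^ δ - (|v t| / vfree) ^ ((δ:ℕ):ℝ) + 1 - (N / D) ^ 2 ≤ 0 := by
        linarith
      nlinarith [mul_le_mul_of_nonneg_left key ha.le]
  have hle := hFanti h0T ⟨hT.le, le_refl T⟩ hT.le
  simp only [hv0, hvl0] at hle
  have hTmem : T ∈ Icc (0:ℝ) T := ⟨hT.le, le_refl T⟩
  have h1 : vl T < v T := hpos T hTmem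
  have h2 : v₀ - vl₀ + 1 ≤ a * T := by
    rw [div_le_iff₀ ha] at hTlarge; linarith
  linarith
end

section
/- Suppose the leader follows the free-flow dynamics v̇_l(t) = a·(1 − (v_l(t)/v_free)^δ) with δ > 0 even, the initial data satisfy v₀ > v_l0 > 0 and x_l0 − x₀ − l = s₀, and additionally s₀ − (v₀ − v_l0)²/(2a) > 0. Let t₁ be the first time at which v(t₁) = v_l(t₁) (so v(t) > v_l(t) for t ∈ [0,t₁)). Then for all t ∈ [0, t₁] one has x_l(t) − x(t) ≥ l + s₀ + (v_l0 − v₀)·t + (a/2)·t² ≥ l + s₀ − (v₀ − v_l0)²/(2a) > l; in particular the vehicles do not collide before their velocities equalize. -/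
/-!
While the follower is faster than the leader the gap shrinks, so it never exceeds its initial
value `l + s₀`. The interaction term of the IDM acceleration is then at least `1` (its
numerator is at least `2√(ab) s₀`, its denominator at most that), and since `0 ≤ v_l < v`
the follower's free-road term dominates the leader's; hence the relative speed `v − v_l`
decreases at rate at least `a`. Integrating twice bounds the gap below by the quadratic
`l + s₀ + (v_l0 − v₀) t + (a/2) t²`, whose minimum is `l + s₀ − (v₀ − v_l0)²/(2a)`.
The leader's speed stays nonnegative because `v̇_l = a > 0` whenever `v_l = 0`.
-/

open Set

theorem IDMAcc_sub_freeFlow_le_neg {a b vfree τ s₀ l x v xl vl : ℝ} (δ : ℕ)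
    (ha : 0 < a) (hb : 0 < b) (hvf : 0 ≤ vfree) (hτ : 0 ≤ τ)
    (hvl : 0 ≤ vl) (hvlv : vl ≤ v) (hgap : 0 < xl - x - l) (hgap_le : xl - x - l ≤ s₀) :
    IDMAcc a b vfree τ s₀ l δ x v xl vl - a * (1 - (vl / vfree) ^ δ) ≤ -a := by
  have hv : 0 ≤ v := hvl.trans hvlv
  have hc : 0 < Real.sqrt (a * b) := Real.sqrt_pos.mpr (mul_pos ha hb)
  rw [IDMAcc, abs_of_nonneg hv, Real.rpow_natCast]
  set Z := (2 * Real.sqrt (a * b) * (s₀ + v * τ) + v * (v - vl)) /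
    (2 * Real.sqrt (a * b) * (xl - x - l))
  have hZ : 1 ≤ Z := by
    rw [le_div_iff₀ (by positivity)]
    nlinarith [mul_nonneg hv hτ, mul_nonneg hv (sub_nonneg.mpr hvlv)]
  have hpow : (vl / vfree) ^ δ ≤ (v / vfree) ^ δ := by gcongr
  nlinarith [mul_le_mul_of_nonneg_left (one_le_pow₀ hZ : 1 ≤ Z ^ 2) ha.le,
    mul_le_mul_of_nonneg_left hpow ha.le]

theorem le_of_hasDerivAt_le {f g f' g' : ℝ → ℝ} {a b : ℝ}
    (hf : ∀ x ∈ Icc a b, HasDerivAt f (f' x) x) (hg : ∀ x ∈ Icc a b, HasDerivAt g (g' x) x)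
    (hfg : f a ≤ g a) (hderiv : ∀ x ∈ Ico a b, f' x ≤ g' x) :
    ∀ x ∈ Icc a b, f x ≤ g x := fun _ hx =>
  image_le_of_deriv_right_le_deriv_boundary
    (fun x hx => (hf x hx).continuousAt.continuousWithinAt)
    (fun x hx => (hf x (Ico_subset_Icc_self hx)).hasDerivWithinAt) hfg
    (fun x hx => (hg x hx).continuousAt.continuousWithinAt)
    (fun x hx => (hg x (Ico_subset_Icc_self hx)).hasDerivWithinAt) hderiv hx

theorem nonneg_of_hasDerivAt_pos_of_eq_zero {f f' : ℝ → ℝ} {a b : ℝ}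
    (hf : ∀ x ∈ Icc a b, HasDerivAt f (f' x) x) (hfa : 0 ≤ f a)
    (hzero : ∀ x ∈ Ico a b, f x = 0 → 0 < f' x) :
    ∀ x ∈ Icc a b, 0 ≤ f x := fun _ hx =>
  neg_nonpos.mp <| image_le_of_deriv_right_lt_deriv_boundary (B := 0) (B' := 0)
    (fun x hx => (hf x hx).continuousAt.neg.continuousWithinAt)
    (fun x hx => (hf x (Ico_subset_Icc_self hx)).neg.hasDerivWithinAt)
    (neg_nonpos.mpr hfa) (fun _ => hasDerivAt_const _ _)
    (fun x hx hfx => neg_neg_of_pos (hzero x hx (neg_eq_zero.mp hfx))) hx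

theorem idm_no_collision_before_equilibrium_general
    (T a b vfree s₀ l τ : ℝ) (δ : ℕ)
    (x₀ xl₀ v₀ vl₀ t₁ : ℝ) (x xl v vl : ℝ → ℝ)
    (ha : 0 < a) (hb : 0 < b) (hvf : 0 < vfree)
    (hτ : τ ∈ Ioo 0 T)
    (hδpos : 0 < δ)
    (hvl₀ : 0 < vl₀) (hgap₀ : xl₀ - x₀ - l = s₀)
    (hsafe : 0 < s₀ - (v₀ - vl₀) ^ 2 / (2 * a))
    (hx0 : x 0 = x₀) (hxl0 : xl 0 = xl₀) (hv0 : v 0 = v₀) (hvl0 : vl 0 = vl₀)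
    (hgap : ∀ t ∈ Icc (0:ℝ) T, 0 < xl t - x t - l)
    (hx : ∀ t ∈ Icc (0:ℝ) T, HasDerivAt x (v t) t)
    (hxl : ∀ t ∈ Icc (0:ℝ) T, HasDerivAt xl (vl t) t)
    (hvl : ∀ t ∈ Icc (0:ℝ) T,
      HasDerivAt vl (a * (1 - (vl t / vfree) ^ δ)) t)
    (hv : ∀ t ∈ Icc (0:ℝ) T,
      HasDerivAt v
        (IDMAcc a b vfree τ s₀ l (δ : ℝ) (x t) (v t) (xl t) (vl t)) t)
    (ht₁ : t₁ ∈ Icc (0:ℝ) T)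
    (hbefore : ∀ t ∈ Ico (0:ℝ) t₁, vl t < v t) :
    ∀ t ∈ Icc (0:ℝ) t₁,
      xl t - x t ≥ l + s₀ + (vl₀ - v₀) * t + (a / 2) * t ^ 2 ∧
      l + s₀ + (vl₀ - v₀) * t + (a / 2) * t ^ 2 ≥
        l + s₀ - (v₀ - vl₀) ^ 2 / (2 * a) ∧
      l + s₀ - (v₀ - vl₀) ^ 2 / (2 * a) > l := by
  have hsub : Icc 0 t₁ ⊆ Icc 0 T := Icc_subset_Icc_right ht₁.2
  have hgap_deriv : ∀ t ∈ Icc 0 t₁, HasDerivAt (fun t => xl t - x t) (vl t - v t) t :=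
    fun t ht => (hxl t (hsub ht)).sub (hx t (hsub ht))
  have hvl_nonneg : ∀ t ∈ Icc 0 t₁, 0 ≤ vl t :=
    nonneg_of_hasDerivAt_pos_of_eq_zero (fun t ht => hvl t (hsub ht)) (hvl0 ▸ hvl₀.le)
      fun t _ h => by simp [h, zero_pow hδpos.ne', ha]
  have hgap_le : ∀ t ∈ Icc 0 t₁, xl t - x t ≤ l + s₀ :=
    le_of_hasDerivAt_le (g := fun _ => l + s₀) (g' := 0) hgap_deriv
      (fun _ _ => hasDerivAt_const _ _)
      (by simp [hx0, hxl0, ← hgap₀]) fun t ht => by simp [(hbefore t ht).le]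
  have hrel : ∀ t ∈ Icc 0 t₁, v t - vl t ≤ v₀ - vl₀ - a * t := by
    refine le_of_hasDerivAt_le (fun t ht => (hv t (hsub ht)).sub (hvl t (hsub ht)))
      (fun t _ => by simpa using ((hasDerivAt_id t).const_mul a).const_sub (v₀ - vl₀))
      (by simp [hv0, hvl0]) fun t ht => ?_
    have ht' := Ico_subset_Icc_self ht
    exact IDMAcc_sub_freeFlow_le_neg δ ha hb hvf.le hτ.1.le (hvl_nonneg t ht')
      (hbefore t ht).le (hgap t (hsub ht')) (by linarith [hgap_le t ht'])
  intro t ht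
  refine ⟨?_, ?_, by linarith⟩
  · refine le_of_hasDerivAt_le (f := fun s => l + s₀ + (vl₀ - v₀) * s + a / 2 * s ^ 2)
      (f' := fun s => vl₀ - v₀ + a * s) (fun s _ => ?_) hgap_deriv
      (by simp [hx0, hxl0, ← hgap₀])
      (fun s hs => by linarith [hrel s (Ico_subset_Icc_self hs)]) t ht
    refine ((((hasDerivAt_id' s).const_mul (vl₀ - v₀)).const_add (l + s₀)).add
      ((hasDerivAt_pow 2 s).const_mul (a / 2))).congr_deriv ?_
    push_cast
    ring
  · have h2a : (v₀ - vl₀) ^ 2 / (2 * a) * (2 * a) = (v₀ - vl₀) ^ 2 :=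
      div_mul_cancel₀ _ (by positivity)
    nlinarith [sq_nonneg (a * t - (v₀ - vl₀))]

/-- **No potential collision before equilibrium of velocities.**
With a free-flow leader (`v̇_l = a (1 − (v_l/v_free)^δ)`, `δ > 0` even),
`v₀ > v_l0 > 0`, initial gap `s₀`, and `s₀ − (v₀ − v_l0)²/(2a) > 0`, if `t₁`
is the first time at which `v(t₁) = v_l(t₁)`, then for all `t ∈ [0, t₁]`
`x_l(t) − x(t) ≥ l + s₀ + (v_l0 − v₀) t + (a/2) t² ≥ l + s₀ − (v₀ − v_l0)²/(2a) > l`,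
so the vehicles do not collide before the velocities equalize. -/
theorem idm_no_collision_before_equilibrium
    (T a b vfree s₀ l τ : ℝ) (δ : ℕ)
    (x₀ xl₀ v₀ vl₀ t₁ : ℝ) (x xl v vl : ℝ → ℝ)
    (hT : 0 < T) (ha : 0 < a) (hb : 0 < b) (hvf : 0 < vfree)
    (hs₀ : 0 < s₀) (hl : 0 < l) (hτ : τ ∈ Ioo 0 T)
    (hδpos : 0 < δ) (hδeven : Even δ)
    (hv₀ : vl₀ < v₀) (hvl₀ : 0 < vl₀) (hgap₀ : xl₀ - x₀ - l = s₀)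
    (hsafe : 0 < s₀ - (v₀ - vl₀) ^ 2 / (2 * a))
    (hx0 : x 0 = x₀) (hxl0 : xl 0 = xl₀) (hv0 : v 0 = v₀) (hvl0 : vl 0 = vl₀)
    (hgap : ∀ t ∈ Icc (0:ℝ) T, 0 < xl t - x t - l)
    (hx : ∀ t ∈ Icc (0:ℝ) T, HasDerivAt x (v t) t)
    (hxl : ∀ t ∈ Icc (0:ℝ) T, HasDerivAt xl (vl t) t)
    (hvl : ∀ t ∈ Icc (0:ℝ) T,
      HasDerivAt vl (a * (1 - (vl t / vfree) ^ δ)) t)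
    (hv : ∀ t ∈ Icc (0:ℝ) T,
      HasDerivAt v
        (IDMAcc a b vfree τ s₀ l (δ : ℝ) (x t) (v t) (xl t) (vl t)) t)
    (ht₁ : t₁ ∈ Icc (0:ℝ) T) (heq : v t₁ = vl t₁)
    (hbefore : ∀ t ∈ Ico (0:ℝ) t₁, vl t < v t) :
    ∀ t ∈ Icc (0:ℝ) t₁,
      xl t - x t ≥ l + s₀ + (vl₀ - v₀) * t + (a / 2) * t ^ 2 ∧
      l + s₀ + (vl₀ - v₀) * t + (a / 2) * t ^ 2 ≥
        l + s₀ - (v₀ - vl₀) ^ 2 / (2 * a) ∧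
      l + s₀ - (v₀ - vl₀) ^ 2 / (2 * a) > l :=
  idm_no_collision_before_equilibrium_general T a b vfree s₀ l τ δ x₀ xl₀ v₀ vl₀ t₁ x xl v vl ha hb
    hvf hτ hδpos hvl₀ hgap₀ hsafe hx0 hxl0 hv0 hvl0 hgap hx hxl hvl hv ht₁ hbefore
end

section
/- As long as a solution of the IDM system exists on [0,T], the follower's velocity satisfies v(t) ≤ max{v₀, v_free} for all t ∈ [0,T]. -/
open MeasureTheory Set

/-- **Boundedness of the velocity.** As long as a solution of the IDM exists
on `[0,T]`, the follower's velocity satisfies `v(t) ≤ max{v₀, v_free}`. -/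
theorem idm_velocity_upper_bound
    (T a b vfree s₀ l δ τ : ℝ) (ulead : ℝ → ℝ) (x₀ xl₀ v₀ vl₀ : ℝ)
    (x xl v vl : ℝ → ℝ)
    (hT : 0 < T) (ha : 0 < a) (hb : 0 < b) (hvf : 0 < vfree)
    (hs₀ : 0 < s₀) (hl : 0 < l) (hτ : τ ∈ Ioo 0 T) (hδ : 1 < δ)
    (hinit : x₀ < xl₀ - l) (hv₀ : 0 ≤ v₀) (hvl₀ : 0 ≤ vl₀)
    (hu' : ∀ t ∈ Icc (0:ℝ) T, 0 ≤ vl₀ + ∫ s in (0:ℝ)..t, ulead s)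
    (hsol : IDMSolution a b vfree τ s₀ l δ T ulead x₀ xl₀ v₀ vl₀ x xl v vl) :
    ∀ t ∈ Icc (0:ℝ) T, v t ≤ max v₀ vfree := by

  intro t ht
  by_contra hgt
  push_neg at hgt
  have hcont : ∀ s ∈ Icc (0:ℝ) T, ContinuousAt v s :=
    fun s hs => (hsol.deriv_v s hs).continuousAt
  have hsub : Icc (0:ℝ) t ⊆ Icc 0 T := Icc_subset_Icc le_rfl ht.2
  set L := v t with hL
  have hvfL : vfree < L := lt_of_le_of_lt (le_max_right v₀ vfree) hgt
  have hv₀L : v₀ < L := lt_of_le_of_lt (le_max_left v₀ vfree) hgt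
  set S : Set ℝ := {s | s ∈ Icc (0:ℝ) t ∧ L ≤ v s} with hSdef
  have htS : t ∈ S := ⟨⟨ht.1, le_rfl⟩, le_rfl⟩
  have hSne : S.Nonempty := ⟨t, htS⟩
  have hSbd : BddBelow S := ⟨0, fun s hs => hs.1.1⟩
  have hSclosed : IsClosed S := by
    have hvc : ContinuousOn v (Icc 0 t) :=
      fun s hs => (hcont s (hsub hs)).continuousWithinAt
    have hEq : S = Icc 0 t ∩ v ⁻¹' Ici L := by
      ext s; simp [hSdef, Set.mem_inter_iff]
    rw [hEq]
    exact hvc.preimage_isClosed_of_isClosed isClosed_Icc isClosed_Ici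
  have ht₁S : sInf S ∈ S := hSclosed.csInf_mem hSne hSbd
  set t₁ := sInf S with ht₁def
  have ht₁T : t₁ ∈ Icc (0:ℝ) T := hsub ht₁S.1
  have ht₁pos : 0 < t₁ := by
    rcases lt_or_eq_of_le ht₁S.1.1 with h | h
    · exact h
    · exfalso
      have : v 0 = v₀ := hsol.init_v
      have : L ≤ v₀ := by rw [← this, h]; exact ht₁S.2
      linarith
  have hbefore : ∀ s, 0 ≤ s → s < t₁ → v s < L := by
    intro s hs0 hst
    by_contra hge
    push_neg at hge
    have hsS : s ∈ S := ⟨⟨hs0, hst.le.trans ht₁S.1.2⟩, hge⟩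
    exact absurd (csInf_le hSbd hsS) (not_le.mpr hst)
  -- the derivative at t₁ is negative
  have hd := hsol.deriv_v t₁ ht₁T
  set d := IDMAcc a b vfree τ s₀ l δ (x t₁) (v t₁) (xl t₁) (vl t₁) with hddef
  have hvt₁ : vfree < v t₁ := lt_of_lt_of_le hvfL ht₁S.2
  have hdneg : d < 0 := by
    rw [hddef]
    unfold IDMAcc
    have h1 : 1 < |v t₁| / vfree := by
      rw [lt_div_iff₀ hvf, one_mul, abs_of_pos (hvf.trans hvt₁)]
      exact hvt₁
    have h2 : (1:ℝ) < (|v t₁| / vfree) ^ δ :=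
      Real.one_lt_rpow_iff_of_pos (by positivity) |>.mpr (Or.inl ⟨h1, by linarith⟩)
    have h3 : (0:ℝ) ≤ ((2 * Real.sqrt (a * b) * (s₀ + v t₁ * τ) + v t₁ * (v t₁ - vl t₁)) /
        (2 * Real.sqrt (a * b) * (xl t₁ - x t₁ - l))) ^ 2 := sq_nonneg _
    have : 1 - (|v t₁| / vfree) ^ δ -
        ((2 * Real.sqrt (a * b) * (s₀ + v t₁ * τ) + v t₁ * (v t₁ - vl t₁)) /
        (2 * Real.sqrt (a * b) * (xl t₁ - x t₁ - l))) ^ 2 < 0 := by linarith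
    exact mul_neg_of_pos_of_neg ha this
  rw [hasDerivAt_iff_tendsto_slope] at hd
  have hd' : Filter.Tendsto (slope v t₁) (nhdsWithin t₁ (Iio t₁)) (nhds d) :=
    hd.mono_left (nhdsWithin_mono t₁ (fun s hs => ne_of_lt hs))
  have hev1 : ∀ᶠ s in nhdsWithin t₁ (Iio t₁), slope v t₁ s < 0 :=
    hd'.eventually (Filter.Tendsto.eventually_lt_const hdneg Filter.tendsto_id)
  have hev2 : ∀ᶠ s in nhdsWithin t₁ (Iio t₁), 0 < s :=
    Filter.Eventually.filter_mono nhdsWithin_le_nhds (eventually_gt_nhds ht₁pos)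
  have hev3 : ∀ᶠ s in nhdsWithin t₁ (Iio t₁), s ∈ Iio t₁ :=
    eventually_mem_nhdsWithin
  obtain ⟨s, hs1, hs2, hs3⟩ := (hev1.and (hev2.and hev3)).exists
  rw [slope_def_field] at hs1
  have hden : s - t₁ < 0 := sub_neg.mpr hs3
  have hnum : 0 < v s - v t₁ := by
    rcases div_neg_iff.mp hs1 with ⟨h', h''⟩ | ⟨h', h''⟩
    · exact h'
    · linarith
  have : v s < L := hbefore s hs2.le hs3
  have : L ≤ v t₁ := ht₁S.2
  linarith
end

section
/- Suppose the follower's initial velocity satisfies v₀ ≥ 0 and the solution of the IDM system maintains the gap bound x_l(t) − x(t) − l ≥ s₀ for all t ∈ [0,T]. Then the follower's velocity remains nonnegative: ẋ(t) = v(t) ≥ 0 for all t ∈ [0,T]. (Indeed, at any time t⁰ with v(t⁰) = 0 one has v̇(t⁰) = a·(1 − (s₀/(x_l(t⁰) − x(t⁰) − l))²) ≥ 0, so the velocity cannot drop below zero.) -/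
/-!
If `v` were negative somewhere, let `t₀` be the last earlier time with `v t₀ = 0`. While `v ≤ 0`
and the gap is at least `s₀`, the acceleration is at least `K * v`: at `v = 0` it equals
`a * (1 - (s₀ / gap) ^ 2) ≥ 0`, and it is Lipschitz in `v` as long as `|v|` and the leader's
velocity stay bounded. The comparison `v' ≥ K * v` with `v t₀ = 0` (Grönwall) then keeps
`v ≥ 0` just after `t₀`, a contradiction.
-/

open MeasureTheory Set

lemma nonneg_of_hasDerivAt_of_mul_le_deriv {v v' : ℝ → ℝ} {K p q : ℝ} (hpq : p ≤ q)
    (hp : 0 ≤ v p) (hv : ∀ t ∈ Icc p q, HasDerivAt v (v' t) t)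
    (hK : ∀ t ∈ Icc p q, K * v t ≤ v' t) : 0 ≤ v q := by
  let w : ℝ → ℝ := fun t => v t * Real.exp (-(K * t))
  have hw : ∀ t ∈ Icc p q,
      HasDerivAt w ((v' t - K * v t) * Real.exp (-(K * t))) t := fun t ht => by
    have he : HasDerivAt (fun s => Real.exp (-(K * s))) (Real.exp (-(K * t)) * -K) t := by
      simpa using ((hasDerivAt_id t).const_mul K).neg.exp
    exact ((hv t ht).mul he).congr_deriv (by ring)
  have hmono : MonotoneOn w (Icc p q) := by
    refine monotoneOn_of_hasDerivWithinAt_nonneg (convex_Icc p q)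
      (fun t ht => (hw t ht).continuousAt.continuousWithinAt)
      (fun t ht => (hw t (interior_subset ht)).hasDerivWithinAt) fun t ht => ?_
    exact mul_nonneg (sub_nonneg.2 (hK t (interior_subset ht))) (Real.exp_pos _).le
  have hwq : 0 ≤ w q := (mul_nonneg hp (Real.exp_pos _).le).trans
    (hmono (left_mem_Icc.2 hpq) (right_mem_Icc.2 hpq) hpq)
  exact nonneg_of_mul_nonneg_left hwq (Real.exp_pos _)

lemma ContinuousOn.exists_eq_zero_forall_lt_zero {v : ℝ → ℝ} {a b : ℝ} (hab : a ≤ b)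
    (hv : ContinuousOn v (Icc a b)) (ha : 0 ≤ v a) (hb : v b < 0) :
    ∃ t₀ ∈ Ico a b, v t₀ = 0 ∧ ∀ t ∈ Ioc t₀ b, v t < 0 := by
  obtain ⟨t₀, ⟨ht₀, hvt₀⟩, hmax⟩ := (isCompact_Icc.of_isClosed_subset
    (hv.preimage_isClosed_of_isClosed isClosed_Icc (isClosed_Ici (a := 0)))
    inter_subset_left).exists_isGreatest ⟨a, left_mem_Icc.2 hab, ha⟩
  have hlt : ∀ t ∈ Ioc t₀ b, v t < 0 := fun t ht =>
    not_le.1 fun h => (ht.1.trans_le (hmax ⟨⟨ht₀.1.trans ht.1.le, ht.2⟩, h⟩)).false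
  have ht₀b : t₀ < b := ht₀.2.lt_of_ne (by rintro rfl; exact absurd hvt₀ (not_le.2 hb))
  obtain ⟨c, hc, hvc⟩ :=
    intermediate_value_Icc' ht₀b.le (hv.mono (Icc_subset_Icc ht₀.1 le_rfl)) ⟨hb.le, hvt₀⟩
  have hct₀ : c = t₀ := le_antisymm (hmax ⟨⟨ht₀.1.trans hc.1, hc.2⟩, hvc.ge⟩) hc.1
  exact ⟨t₀, ⟨ht₀.1, ht₀b⟩, hct₀ ▸ hvc, hlt⟩

-- `∫ u in a..t, f u` is `0` once `f` is not integrable on `[a, t]`, so no integrability is needed.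
lemma exists_forall_Icc_intervalIntegral_le (f : ℝ → ℝ) {a t₀ t₁ : ℝ} (ha : a ≤ t₀)
    (h : t₀ < t₁) : ∃ s ∈ Ioc t₀ t₁, ∃ M, ∀ t ∈ Icc t₀ s, ∫ u in a..t, f u ≤ M := by
  by_cases hf : ∃ s ∈ Ioc t₀ t₁, IntervalIntegrable f volume a s
  · obtain ⟨s, hs, hfs⟩ := hf
    have hcont := intervalIntegral.continuousOn_primitive_interval' hfs left_mem_uIcc
    have hsub : Icc t₀ s ⊆ uIcc a s := by
      rw [uIcc_of_le (ha.trans hs.1.le)]; exact Icc_subset_Icc ha le_rfl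
    obtain ⟨M, hM⟩ := isCompact_Icc.bddAbove_image (hcont.mono hsub)
    exact ⟨s, hs, M, fun t ht => hM (mem_image_of_mem _ ht)⟩
  · push Not at hf
    refine ⟨t₁, ⟨h, le_rfl⟩, max (∫ u in a..t₀, f u) 0, fun t ht => ?_⟩
    rcases ht.1.eq_or_lt with rfl | hlt
    · exact le_max_left _ _
    · rw [intervalIntegral.integral_undef (hf t ⟨hlt, ht.2⟩)]
      exact le_max_right _ _

lemma rpow_le_rpow_sub_one_mul {x X δ : ℝ} (hx : 0 ≤ x) (hxX : x ≤ X) (hδ : 1 ≤ δ) :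
    x ^ δ ≤ X ^ (δ - 1) * x := by
  calc x ^ δ = x ^ (δ - 1) * x := by
        rw [← Real.rpow_add_one' hx (by linarith), sub_add_cancel]
    _ ≤ X ^ (δ - 1) * x := by gcongr

lemma abs_IDM_interaction_le {σ τ s₀ v vl V M : ℝ} (hσ : 0 ≤ σ) (hτ : 0 ≤ τ) (hs₀ : 0 ≤ s₀)
    (hv : v ≤ 0) (hV : |v| ≤ V) (hvl : 0 ≤ vl) (hM : vl ≤ M) :
    |σ * (s₀ + v * τ) + v * (v - vl)| ≤ σ * s₀ + (σ * τ + V + M) * |v| := by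
  rw [abs_of_nonpos hv] at hV ⊢
  rw [abs_le]
  constructor <;> nlinarith [mul_nonneg hσ hτ]

lemma IDM_interaction_sq_le {σ s₀ G N β u V : ℝ} (hP : 0 < σ * s₀) (hG : σ * s₀ ≤ σ * G)
    (hN : |N| ≤ σ * s₀ + β * u) (hβ : 0 ≤ β) (hu : 0 ≤ u) (huV : u ≤ V) :
    (N / (σ * G)) ^ 2 ≤ 1 + β / (σ * s₀) * (2 + β / (σ * s₀) * V) * u := by
  set r := β / (σ * s₀)
  have hr : 0 ≤ r := div_nonneg hβ hP.le
  have habs : |N / (σ * G)| ≤ 1 + r * u := by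
    rw [abs_div, abs_of_pos (hP.trans_le hG), div_le_iff₀ (hP.trans_le hG)]
    calc |N| ≤ σ * s₀ + β * u := hN
      _ = (1 + r * u) * (σ * s₀) := by
        rw [add_mul, one_mul, mul_right_comm, div_mul_cancel₀ _ hP.ne']
      _ ≤ (1 + r * u) * (σ * G) := by gcongr
  calc (N / (σ * G)) ^ 2 ≤ (1 + r * u) ^ 2 := by
        rw [← sq_abs]; gcongr
    _ ≤ 1 + r * (2 + r * V) * u := by
        nlinarith [mul_le_mul_of_nonneg_left huV (mul_nonneg (mul_nonneg hr hr) hu)]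

lemma exists_mul_le_IDMAcc {a b vfree τ s₀ δ : ℝ} (l : ℝ) (ha : 0 < a) (hb : 0 < b)
    (hvf : 0 < vfree) (hs₀ : 0 < s₀) (hτ : 0 ≤ τ) (hδ : 1 ≤ δ) (V M : ℝ) :
    ∃ K, ∀ x v xl vl, s₀ ≤ xl - x - l → v ≤ 0 → |v| ≤ V → 0 ≤ vl → vl ≤ M →
      K * v ≤ IDMAcc a b vfree τ s₀ l δ x v xl vl := by
  have hσ : 0 < 2 * Real.sqrt (a * b) := by positivity
  simp only [IDMAcc]
  generalize 2 * Real.sqrt (a * b) = σ at hσ ⊢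
  refine ⟨a * ((V / vfree) ^ (δ - 1) / vfree +
    (σ * τ + V + M) / (σ * s₀) * (2 + (σ * τ + V + M) / (σ * s₀) * V)), ?_⟩
  intro x v xl vl hgap hv hV hvl hM
  have h_free : (|v| / vfree) ^ δ ≤ (V / vfree) ^ (δ - 1) / vfree * |v| := by
    calc (|v| / vfree) ^ δ ≤ (V / vfree) ^ (δ - 1) * (|v| / vfree) :=
          rpow_le_rpow_sub_one_mul (by positivity) (by gcongr) hδ
      _ = _ := by ring
  have h_int := IDM_interaction_sq_le (G := xl - x - l) (by positivity) (by gcongr)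
    (abs_IDM_interaction_le hσ.le hτ hs₀.le hv hV hvl hM)
    (by linarith [abs_nonneg v, hσ.le, mul_nonneg hσ.le hτ]) (abs_nonneg v) hV
  rw [abs_of_nonpos hv] at h_free h_int ⊢
  linarith [mul_le_mul_of_nonneg_left (add_le_add h_free h_int) ha.le]

theorem idm_velocity_nonneg_of_gap_ge_s0_general
    (T a b vfree s₀ l δ τ : ℝ) (ulead : ℝ → ℝ) (x₀ xl₀ v₀ vl₀ : ℝ)
    (x xl v vl : ℝ → ℝ)
    (ha : 0 < a) (hb : 0 < b) (hvf : 0 < vfree)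
    (hs₀ : 0 < s₀) (hτ : τ ∈ Ioo 0 T) (hδ : 1 < δ)
    (hv₀ : 0 ≤ v₀)
    (hu' : ∀ t ∈ Icc (0:ℝ) T, 0 ≤ vl₀ + ∫ s in (0:ℝ)..t, ulead s)
    (hsol : IDMSolution a b vfree τ s₀ l δ T ulead x₀ xl₀ v₀ vl₀ x xl v vl)
    (hgap : ∀ t ∈ Icc (0:ℝ) T, s₀ ≤ xl t - x t - l) :
    ∀ t ∈ Icc (0:ℝ) T, 0 ≤ v t := by
  intro t₁ ht₁
  by_contra! hvt₁
  have hvc : ContinuousOn v (Icc 0 T) := fun t ht =>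
    (hsol.deriv_v t ht).continuousAt.continuousWithinAt
  obtain ⟨t₀, ht₀, hvt₀, hneg⟩ := ContinuousOn.exists_eq_zero_forall_lt_zero ht₁.1
    (hvc.mono (Icc_subset_Icc le_rfl ht₁.2)) (hsol.init_v ▸ hv₀) hvt₁
  obtain ⟨V, hV⟩ := isCompact_Icc.exists_bound_of_continuousOn hvc
  obtain ⟨s, hs, M, hM⟩ := exists_forall_Icc_intervalIntegral_le ulead ht₀.1 ht₀.2
  obtain ⟨K, hK⟩ := exists_mul_le_IDMAcc l ha hb hvf hs₀ hτ.1.le hδ.le V (vl₀ + M)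
  have hsub : Icc t₀ s ⊆ Icc 0 T := Icc_subset_Icc ht₀.1 (hs.2.trans ht₁.2)
  have hv_nonpos : ∀ t ∈ Icc t₀ s, v t ≤ 0 := fun t ht => by
    rcases ht.1.eq_or_lt with rfl | hlt
    exacts [hvt₀.le, (hneg t ⟨hlt, ht.2.trans hs.2⟩).le]
  have hvs : 0 ≤ v s := by
    refine nonneg_of_hasDerivAt_of_mul_le_deriv (K := K) hs.1.le hvt₀.ge
      (fun t ht => hsol.deriv_v t (hsub ht)) fun t ht => ?_
    have hvl := hsol.eq_vl t (hsub ht)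
    exact hK _ _ _ _ (hgap t (hsub ht)) (hv_nonpos t ht) (Real.norm_eq_abs _ ▸ hV t (hsub ht))
      (hvl ▸ hu' t (hsub ht)) (by linarith [hM t ht])
  exact (hneg s hs).not_ge hvs

/-- **Nonnegativity of the velocity under a safe gap.**
If `v₀ ≥ 0` and the gap satisfies `x_l(t) − x(t) − l ≥ s₀` for all
`t ∈ [0,T]`, then the follower's velocity remains nonnegative on `[0,T]`. -/
theorem idm_velocity_nonneg_of_gap_ge_s0
    (T a b vfree s₀ l δ τ : ℝ) (ulead : ℝ → ℝ) (x₀ xl₀ v₀ vl₀ : ℝ)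
    (x xl v vl : ℝ → ℝ)
    (hT : 0 < T) (ha : 0 < a) (hb : 0 < b) (hvf : 0 < vfree)
    (hs₀ : 0 < s₀) (hl : 0 < l) (hτ : τ ∈ Ioo 0 T) (hδ : 1 < δ)
    (hinit : x₀ < xl₀ - l) (hv₀ : 0 ≤ v₀) (hvl₀ : 0 ≤ vl₀)
    (hu' : ∀ t ∈ Icc (0:ℝ) T, 0 ≤ vl₀ + ∫ s in (0:ℝ)..t, ulead s)
    (hsol : IDMSolution a b vfree τ s₀ l δ T ulead x₀ xl₀ v₀ vl₀ x xl v vl)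
    (hgap : ∀ t ∈ Icc (0:ℝ) T, s₀ ≤ xl t - x t - l) :
    ∀ t ∈ Icc (0:ℝ) T, 0 ≤ v t :=
  idm_velocity_nonneg_of_gap_ge_s0_general T a b vfree s₀ l δ τ ulead x₀ xl₀ v₀ vl₀ x xl v vl ha hb
    hvf hs₀ hτ hδ hv₀ hu' hsol hgap
end

section
/- The velocity projected IDM admits, on a sufficiently small time horizon T* > 0, a unique solution (x, v) ∈ W^{1,∞}((0,T*))². -/
/-!
On the region where the gap `x_l - x - l` is bounded below by some `ε > 0` and all
positions and velocities are bounded, `Acc` is `C¹` (for `δ ≥ 1` the map `w ↦ w ^ δ` is `C¹`,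
and on `w ≥ 0` it agrees with `|w| ^ δ`), hence Lipschitz on that compact convex set. Composing
with the `1`-Lipschitz projection `v ↦ max v 0` makes the follower's vector field Lipschitz
there, uniformly in time, as long as the leader stays bounded. The leader is obtained by
integrating `u_lead` twice, so it is continuous. Picard–Lindelöf on a ball of radius a quarter
of the initial gap yields a local solution, and any two solutions on `[0, T*]` stay in a common
such region by compactness, so Gronwall's inequality gives uniqueness.
-/

open MeasureTheory Set

/-- A solution of the **velocity projected IDM** on `[0, T]`:
`ẋ = max{v, 0}`, `v̇ = Acc(x, max{v,0}, x_l, v_l)`. -/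
structure VPIDMSolution (a b vfree τ s₀ l δ T : ℝ) (ulead : ℝ → ℝ)
    (x₀ xl₀ v₀ vl₀ : ℝ) (x xl v vl : ℝ → ℝ) : Prop where
  init_x : x 0 = x₀
  init_xl : xl 0 = xl₀
  init_v : v 0 = v₀
  init_vl : vl 0 = vl₀
  gap_pos : ∀ t ∈ Icc (0:ℝ) T, 0 < xl t - x t - l
  deriv_x : ∀ t ∈ Icc (0:ℝ) T, HasDerivAt x (max (v t) 0) t
  deriv_xl : ∀ t ∈ Icc (0:ℝ) T, HasDerivAt xl (vl t) t
  eq_vl : ∀ t ∈ Icc (0:ℝ) T, vl t = vl₀ + ∫ s in (0:ℝ)..t, ulead s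
  deriv_v : ∀ t ∈ Icc (0:ℝ) T,
    HasDerivAt v (IDMAcc a b vfree τ s₀ l δ (x t) (max (v t) 0) (xl t) (vl t)) t

open Metric
open scoped NNReal

section ProdDeriv

variable {𝕜 E F : Type*} [NontriviallyNormedField 𝕜] [NormedAddCommGroup E] [NormedSpace 𝕜 E]
  [NormedAddCommGroup F] [NormedSpace 𝕜 F] {f : 𝕜 → E × F} {f' : E × F} {t : 𝕜}

theorem HasDerivAt.fst (h : HasDerivAt f f' t) : HasDerivAt (fun s => (f s).1) f'.1 t :=
  (ContinuousLinearMap.fst 𝕜 E F).hasFDerivAt.comp_hasDerivAt t h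

theorem HasDerivAt.snd (h : HasDerivAt f f' t) : HasDerivAt (fun s => (f s).2) f'.2 t :=
  (ContinuousLinearMap.snd 𝕜 E F).hasFDerivAt.comp_hasDerivAt t h

end ProdDeriv

-- `IsPicardLindelof.exists_eq_forall_mem_Icc_hasDerivWithinAt₀`, remembering that the fixed point
-- of the Picard iteration is `L`-Lipschitz and stays in the ball.
theorem IsPicardLindelof.exists_eq_lipschitzWith_mem_closedBall_hasDerivWithinAt
    {E : Type*} [NormedAddCommGroup E] [NormedSpace ℝ E] [CompleteSpace E]
    {f : ℝ → E → E} {tmin tmax : ℝ} {t₀ : Icc tmin tmax} {x₀ : E} {a L K : ℝ≥0}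
    (hf : IsPicardLindelof f t₀ x₀ a 0 L K) :
    ∃ α : ℝ → E, α t₀ = x₀ ∧ LipschitzWith L α ∧ (∀ t, α t ∈ closedBall x₀ a) ∧
      ∀ t ∈ Icc tmin tmax, HasDerivWithinAt α (f t (α t)) (Icc tmin tmax) t := by
  obtain ⟨α, hα⟩ := ODE.FunSpace.exists_isFixedPt_next hf (mem_closedBall_self le_rfl)
  have hlip : LipschitzWith (L * 1) α.compProj := α.lipschitzWith.comp (LipschitzWith.projIcc _)
  rw [mul_one] at hlip
  refine ⟨α.compProj, by rw [ODE.FunSpace.compProj_val, ← hα, ODE.FunSpace.next_apply₀], hlip,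
    fun t => α.compProj_mem_closedBall hf.mul_max_le, fun t ht => ?_⟩
  apply ODE.hasDerivWithinAt_picard_Icc t₀.2 hf.continuousOn_uncurry
    α.continuous_compProj.continuousOn (fun _ _ => α.compProj_mem_closedBall hf.mul_max_le)
    x₀ ht |>.congr_of_mem _ ht
  intro t' ht'
  nth_rw 1 [← hα]
  rw [ODE.FunSpace.compProj_of_mem ht', ODE.FunSpace.next_apply]

lemma exists_leader_trajectory {T : ℝ} {ulead : ℝ → ℝ} (hu : IntegrableOn ulead (Ioc 0 T))
    (xl₀ vl₀ : ℝ) : ∃ xl vl : ℝ → ℝ, xl 0 = xl₀ ∧ vl 0 = vl₀ ∧ Continuous vl ∧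
      (∀ t, HasDerivAt xl (vl t) t) ∧ ∀ t ∈ Icc 0 T, vl t = vl₀ + ∫ s in 0..t, ulead s := by
  -- Cut off outside `(0, T]`, `ulead` is integrable on `ℝ`, so the leader is defined for all times.
  set u := (Ioc 0 T).indicator ulead
  have hu_int : ∀ t₁ t₂, IntervalIntegrable u volume t₁ t₂ := fun t₁ t₂ =>
    ((integrable_indicator_iff measurableSet_Ioc).2 hu).intervalIntegrable
  set vl : ℝ → ℝ := fun t => vl₀ + ∫ s in 0..t, u s
  have hvl : Continuous vl := continuous_const.add (intervalIntegral.continuous_primitive hu_int 0)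
  refine ⟨fun t => xl₀ + ∫ s in 0..t, vl s, vl, by simp, by simp [vl], hvl,
    fun t => (hvl.integral_hasStrictDerivAt 0 t).hasDerivAt.const_add xl₀, fun t ht => ?_⟩
  simp only [vl, add_right_inj, intervalIntegral.integral_of_le ht.1]
  refine setIntegral_congr_fun measurableSet_Ioc fun s hs => ?_
  exact indicator_of_mem (Ioc_subset_Ioc_right ht.2 hs) ulead

-- Points `(x, w, x_l, v_l)`: follower position, projected follower velocity, leader position and
-- leader velocity, with the sup norm.
def idmRegion (l ε R : ℝ) : Set (ℝ × ℝ × ℝ × ℝ) :=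
  closedBall 0 R ∩ {q | 0 ≤ q.2.1 ∧ ε ≤ q.2.2.1 - q.1 - l}

lemma isCompact_idmRegion (l ε R : ℝ) : IsCompact (idmRegion l ε R) :=
  (isCompact_closedBall _ _).inter_right <|
    (isClosed_le continuous_const (by fun_prop : Continuous fun q : ℝ × ℝ × ℝ × ℝ => q.2.1)).inter
      (isClosed_le continuous_const
        (by fun_prop : Continuous fun q : ℝ × ℝ × ℝ × ℝ => q.2.2.1 - q.1 - l))

lemma convex_idmRegion (l ε R : ℝ) : Convex ℝ (idmRegion l ε R) := by
  refine (convex_closedBall _ _).inter ?_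
  intro p hp q hq s t hs ht hst
  obtain rfl : t = 1 - s := by linarith
  simp only [mem_ofPred_eq, Prod.fst_add, Prod.snd_add, Prod.smul_fst, Prod.smul_snd,
    smul_eq_mul] at *
  constructor
  · nlinarith
  · nlinarith [mul_le_mul_of_nonneg_left hp.2 hs, mul_le_mul_of_nonneg_left hq.2 ht]

def followerRegion (l ε R X : ℝ) : Set (ℝ × ℝ) :=
  closedBall 0 R ∩ {p | ε ≤ X - p.1 - l}

section

variable {a b vfree τ s₀ l δ : ℝ}

lemma followerRegion_mono {ε ε' R R' X : ℝ} (hε : ε' ≤ ε) (hR : R ≤ R') :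
    followerRegion l ε R X ⊆ followerRegion l ε' R' X :=
  inter_subset_inter (closedBall_subset_closedBall hR) fun _ hp => hε.trans hp

lemma mk_mem_idmRegion {ε R X V : ℝ} {p : ℝ × ℝ} (hp : p ∈ followerRegion l ε R X)
    (hX : |X| ≤ R) (hV : |V| ≤ R) : (p.1, max p.2 0, X, V) ∈ idmRegion l ε R := by
  obtain ⟨hpR, hgap⟩ := hp
  rw [mem_closedBall_zero_iff] at hpR
  have hmax : |max p.2 0| ≤ R := by
    rw [abs_of_nonneg (le_max_right _ _)]
    exact max_le ((le_abs_self _).trans ((norm_snd_le p).trans hpR)) ((abs_nonneg _).trans hX)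
  refine ⟨?_, le_max_right _ _, hgap⟩
  rw [mem_closedBall_zero_iff, Prod.norm_def, Prod.norm_def, Prod.norm_def]
  exact max_le ((norm_fst_le p).trans hpR) (max_le hmax (max_le hX hV))

lemma closedBall_subset_followerRegion {X₀ X x₀ v₀ r R : ℝ} (hr : r = (X₀ - x₀ - l) / 4)
    (hX : |X - X₀| ≤ r) (hR : ‖(x₀, v₀)‖ + r ≤ R) :
    closedBall (x₀, v₀) r ⊆ followerRegion l (2 * r) R X := by
  intro p hp
  refine ⟨mem_closedBall_zero_iff.2 ?_, ?_⟩
  · have := norm_le_norm_add_norm_sub' p (x₀, v₀)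
    rw [← dist_eq_norm] at this
    linarith [mem_closedBall.1 hp]
  · have h1 := mem_closedBall.1 hp
    rw [Prod.dist_eq, max_le_iff, Real.dist_eq] at h1
    have := abs_le.1 h1.1
    have := abs_le.1 hX
    simp only [mem_ofPred_eq]
    linarith

lemma contDiffOn_IDMAcc (ha : 0 < a) (hb : 0 < b) (hδ : 1 ≤ δ) {ε : ℝ} (hε : 0 < ε) (R : ℝ) :
    ContDiffOn ℝ 1 (fun q : ℝ × ℝ × ℝ × ℝ => IDMAcc a b vfree τ s₀ l δ q.1 q.2.1 q.2.2.1 q.2.2.2)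
      (idmRegion l ε R) := by
  have hpow : ContDiff ℝ 1 fun q : ℝ × ℝ × ℝ × ℝ => (q.2.1 / vfree) ^ δ :=
    (Real.contDiff_rpow_const_of_le (n := 1) (by simpa using hδ)).comp (by fun_prop)
  -- On the region `|w| = w`, and `w ↦ w ^ δ` is `C¹` on all of `ℝ` because `δ ≥ 1`.
  refine ContDiffOn.congr (f := fun q : ℝ × ℝ × ℝ × ℝ => a * (1 - (q.2.1 / vfree) ^ δ -
      ((2 * Real.sqrt (a * b) * (s₀ + q.2.1 * τ) + q.2.1 * (q.2.1 - q.2.2.2)) /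
        (2 * Real.sqrt (a * b) * (q.2.2.1 - q.1 - l))) ^ 2)) ?_ ?_
  · refine contDiffOn_const.mul ((contDiffOn_const.sub hpow.contDiffOn).sub
      (ContDiffOn.pow (ContDiffOn.div (by fun_prop) (by fun_prop) ?_) 2))
    intro q hq
    have := hq.2.2
    have : 0 < q.2.2.1 - q.1 - l := by linarith
    positivity
  · intro q hq
    simp only [IDMAcc, abs_of_nonneg hq.2.1]

noncomputable def vpidmField (a b vfree τ s₀ l δ X V : ℝ) (p : ℝ × ℝ) : ℝ × ℝ :=
  (max p.2 0, IDMAcc a b vfree τ s₀ l δ p.1 (max p.2 0) X V)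

lemma exists_lipschitzOnWith_vpidmField (ha : 0 < a) (hb : 0 < b) (hδ : 1 ≤ δ) {ε : ℝ}
    (hε : 0 < ε) (R : ℝ) : ∃ K, ∀ X V, |X| ≤ R → |V| ≤ R →
      LipschitzOnWith K (vpidmField a b vfree τ s₀ l δ X V) (followerRegion l ε R X) := by
  obtain ⟨K, hK⟩ := (contDiffOn_IDMAcc (vfree := vfree) (τ := τ) (s₀ := s₀) (l := l) ha hb hδ hε
    R).exists_lipschitzOnWith one_ne_zero (convex_idmRegion l ε R) (isCompact_idmRegion l ε R)
  refine ⟨max 1 (K * max 1 (1 * 1)), fun X V hX hV => ?_⟩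
  have hmax : LipschitzWith 1 fun p : ℝ × ℝ => max p.2 0 := LipschitzWith.prod_snd.max_const 0
  have hembed : LipschitzWith (max 1 (1 * 1)) fun p : ℝ × ℝ => (p.1, max p.2 0, X, V) :=
    LipschitzWith.prod_fst.prodMk ((LipschitzWith.prodMk_right (X, V)).comp hmax)
  have hmaps : MapsTo (fun p : ℝ × ℝ => (p.1, max p.2 0, X, V)) (followerRegion l ε R X)
      (idmRegion l ε R) := fun p hp => mk_mem_idmRegion hp hX hV
  have hG := hK.comp hembed.lipschitzOnWith hmaps
  exact hmax.lipschitzOnWith.prodMk hG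

lemma exists_norm_vpidmField_le (ha : 0 < a) (hb : 0 < b) (hδ : 1 ≤ δ) {ε : ℝ}
    (hε : 0 < ε) (R : ℝ) : ∃ L : ℝ≥0, ∀ X V, |X| ≤ R → |V| ≤ R → ∀ p ∈ followerRegion l ε R X,
      ‖vpidmField a b vfree τ s₀ l δ X V p‖ ≤ L := by
  obtain ⟨C, hC⟩ := (isCompact_idmRegion l ε R).exists_bound_of_continuousOn
    (contDiffOn_IDMAcc (vfree := vfree) (τ := τ) (s₀ := s₀) (l := l) ha hb hδ hε R).continuousOn
  refine ⟨(max R C).toNNReal, fun X V hX hV p hp => ?_⟩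
  have hq := mk_mem_idmRegion hp hX hV
  have h1 := hC _ hq
  dsimp only at h1
  have h2 : ‖max p.2 0‖ ≤ R := by
    have := hq.1
    rw [mem_closedBall_zero_iff, Prod.norm_def, Prod.norm_def] at this
    exact (le_max_left _ _).trans ((le_max_right _ _).trans this)
  rw [vpidmField, Prod.norm_def]
  exact (max_le_max h2 h1).trans (Real.le_coe_toNNReal _)

lemma isPicardLindelof_vpidmField (ha : 0 < a) (hb : 0 < b) (hδ : 1 ≤ δ) {xl vl : ℝ → ℝ}
    (hxl : Continuous xl) (hvl : Continuous vl) {ε R r T : ℝ} (hε : 0 < ε) (hr : 0 ≤ r)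
    (hT : 0 ≤ T) {p₀ : ℝ × ℝ} {K L : ℝ≥0}
    (hK : ∀ X V, |X| ≤ R → |V| ≤ R →
      LipschitzOnWith K (vpidmField a b vfree τ s₀ l δ X V) (followerRegion l ε R X))
    (hL : ∀ X V, |X| ≤ R → |V| ≤ R → ∀ p ∈ followerRegion l ε R X,
      ‖vpidmField a b vfree τ s₀ l δ X V p‖ ≤ L)
    (hleader : ∀ t ∈ Icc (-T) T, |xl t| ≤ R ∧ |vl t| ≤ R ∧
      closedBall p₀ r ⊆ followerRegion l ε R (xl t))
    (hLT : L * T ≤ r) :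
    IsPicardLindelof (fun t => vpidmField a b vfree τ s₀ l δ (xl t) (vl t))
      (⟨0, neg_nonpos.2 hT, hT⟩ : Icc (-T) T) p₀ r.toNNReal 0 L K := by
  have hr' : (r.toNNReal : ℝ) = r := Real.coe_toNNReal r hr
  refine ⟨fun t ht => ?_, fun p hp => ?_, fun t ht p hp => ?_, ?_⟩
  · obtain ⟨hX, hV, hsub⟩ := hleader t ht
    rw [hr']
    exact (hK _ _ hX hV).mono hsub
  · rw [hr'] at hp
    have hmaps : MapsTo (fun t => (p.1, max p.2 0, xl t, vl t)) (Icc (-T) T)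
        (idmRegion l ε R) := fun t ht => by
      obtain ⟨hX, hV, hsub⟩ := hleader t ht
      exact mk_mem_idmRegion (hsub hp) hX hV
    have hG := (contDiffOn_IDMAcc (vfree := vfree) (τ := τ) (s₀ := s₀) (l := l)
      ha hb hδ hε R).continuousOn
    have hc : Continuous fun t => (p.1, max p.2 0, xl t, vl t) := by fun_prop
    have hcomp := hG.comp hc.continuousOn hmaps
    exact continuousOn_const.prodMk hcomp
  · obtain ⟨hX, hV, hsub⟩ := hleader t ht
    rw [hr'] at hp
    exact hL _ _ hX hV p (hsub hp)
  · simpa only [sub_zero, zero_sub, neg_neg, max_self, NNReal.coe_zero, hr'] using hLT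

theorem exists_local_vpidm_trajectory (ha : 0 < a) (hb : 0 < b) (hδ : 1 ≤ δ) {xl vl : ℝ → ℝ}
    (hxl : Continuous xl) (hvl : Continuous vl) {x₀ v₀ : ℝ} (hgap : x₀ < xl 0 - l) :
    ∃ T > 0, ∃ L : ℝ≥0, ∃ α : ℝ → ℝ × ℝ, α 0 = (x₀, v₀) ∧ LipschitzWith L α ∧
      ∀ t ∈ Ioo (-T) T, 0 < xl t - (α t).1 - l ∧
        HasDerivAt α (vpidmField a b vfree τ s₀ l δ (xl t) (vl t) (α t)) t := by
  set r := (xl 0 - x₀ - l) / 4 with hr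
  have hr0 : 0 < r := by rw [hr]; linarith
  obtain ⟨t₁, ht₁, hxl_near⟩ := Metric.continuousAt_iff.1 (hxl.continuousAt (x := 0)) r hr0
  obtain ⟨B, hB⟩ := isCompact_Icc.exists_bound_of_continuousOn
    (hxl.prodMk hvl).continuousOn (s := Icc (-1 : ℝ) 1)
  set R := max (‖(x₀, v₀)‖ + r) B
  have h2r : 0 < 2 * r := by positivity
  obtain ⟨K, hK⟩ := exists_lipschitzOnWith_vpidmField (vfree := vfree) (τ := τ) (s₀ := s₀)
    (l := l) ha hb hδ h2r R
  obtain ⟨L, hL⟩ := exists_norm_vpidmField_le (vfree := vfree) (τ := τ) (s₀ := s₀)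
    (l := l) ha hb hδ h2r R
  set T := min (t₁ / 2) (min 1 (r / (L + 1)))
  have hT : 0 < T := lt_min (by positivity) (lt_min one_pos (by positivity))
  have hTt₁ : T ≤ t₁ / 2 := min_le_left _ _
  have hT1 : T ≤ 1 := (min_le_right _ _).trans (min_le_left _ _)
  have hLT : L * T ≤ r := calc
    (L : ℝ) * T ≤ L * (r / (L + 1)) := by gcongr; exact (min_le_right _ _).trans (min_le_right _ _)
    _ ≤ r := by
      rw [mul_div_assoc', div_le_iff₀ (by positivity)]
      nlinarith
  have hleader : ∀ t ∈ Icc (-T) T, |xl t| ≤ R ∧ |vl t| ≤ R ∧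
      closedBall (x₀, v₀) r ⊆ followerRegion l (2 * r) R (xl t) := by
    intro t ht
    have hBt := hB t ⟨by linarith [ht.1], by linarith [ht.2]⟩
    refine ⟨(norm_fst_le (xl t, vl t)).trans (hBt.trans (le_max_right _ _)),
      (norm_snd_le (xl t, vl t)).trans (hBt.trans (le_max_right _ _)),
      closedBall_subset_followerRegion hr (hxl_near ?_).le (le_max_left _ _)⟩
    rw [Real.dist_eq, sub_zero, abs_lt]
    constructor <;> linarith [ht.1, ht.2]
  obtain ⟨α, hα0, hαL, hαr, hα⟩ := (isPicardLindelof_vpidmField ha hb hδ hxl hvl h2r hr0.le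
    hT.le hK hL hleader hLT).exists_eq_lipschitzWith_mem_closedBall_hasDerivWithinAt
  refine ⟨T, hT, L, α, hα0, hαL, fun t ht => ⟨?_, ?_⟩⟩
  · have hball := hαr t
    rw [Real.coe_toNNReal r hr0.le] at hball
    have : 2 * r ≤ xl t - (α t).1 - l := ((hleader t (Ioo_subset_Icc_self ht)).2.2 hball).2
    linarith
  · exact (hα t (Ioo_subset_Icc_self ht)).hasDerivAt (Icc_mem_nhds ht.1 ht.2)

namespace VPIDMSolution

variable {T : ℝ} {ulead : ℝ → ℝ} {x₀ xl₀ v₀ vl₀ : ℝ} {x xl v vl x' xl' v' vl' : ℝ → ℝ}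

lemma hasDerivAt_prod (S : VPIDMSolution a b vfree τ s₀ l δ T ulead x₀ xl₀ v₀ vl₀ x xl v vl)
    {t : ℝ} (ht : t ∈ Icc 0 T) :
    HasDerivAt (fun t => (x t, v t)) (vpidmField a b vfree τ s₀ l δ (xl t) (vl t) (x t, v t)) t :=
  (S.deriv_x t ht).prodMk (S.deriv_v t ht)

lemma continuousOn_prod (S : VPIDMSolution a b vfree τ s₀ l δ T ulead x₀ xl₀ v₀ vl₀ x xl v vl) :
    ContinuousOn (fun t => (x t, v t)) (Icc 0 T) :=
  fun _ ht => (S.hasDerivAt_prod ht).continuousAt.continuousWithinAt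

lemma continuousOn_xl (S : VPIDMSolution a b vfree τ s₀ l δ T ulead x₀ xl₀ v₀ vl₀ x xl v vl) :
    ContinuousOn xl (Icc 0 T) :=
  fun _ ht => (S.deriv_xl _ ht).continuousAt.continuousWithinAt

lemma exists_mem_followerRegion
    (S : VPIDMSolution a b vfree τ s₀ l δ T ulead x₀ xl₀ v₀ vl₀ x xl v vl)
    (hvl : ContinuousOn vl (Icc 0 T)) :
    ∃ ε > 0, ∃ R, ∀ t ∈ Icc 0 T,
      (x t, v t) ∈ followerRegion l ε R (xl t) ∧ |xl t| ≤ R ∧ |vl t| ≤ R := by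
  obtain ⟨ε, hε, hgap⟩ := isCompact_Icc.exists_forall_le'
    ((S.continuousOn_xl.sub S.continuousOn_prod.fst).sub continuousOn_const) S.gap_pos
  obtain ⟨R, hR⟩ := isCompact_Icc.exists_bound_of_continuousOn
    (S.continuousOn_prod.prodMk (S.continuousOn_xl.prodMk hvl))
  refine ⟨ε, hε, R, fun t ht => ⟨⟨mem_closedBall_zero_iff.2 ?_, hgap t ht⟩, ?_, ?_⟩⟩
  · exact (norm_fst_le _).trans (hR t ht)
  · exact (norm_fst_le (xl t, vl t)).trans ((norm_snd_le _).trans (hR t ht))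
  · exact (norm_snd_le (xl t, vl t)).trans ((norm_snd_le _).trans (hR t ht))

theorem unique (ha : 0 < a) (hb : 0 < b) (hδ : 1 ≤ δ)
    (S : VPIDMSolution a b vfree τ s₀ l δ T ulead x₀ xl₀ v₀ vl₀ x xl v vl)
    (S' : VPIDMSolution a b vfree τ s₀ l δ T ulead x₀ xl₀ v₀ vl₀ x' xl' v' vl')
    (hvl : ContinuousOn vl (Icc 0 T)) :
    ∀ t ∈ Icc 0 T, x' t = x t ∧ xl' t = xl t ∧ v' t = v t ∧ vl' t = vl t := by
  have hvl' : EqOn vl' vl (Icc 0 T) := fun t ht => by rw [S'.eq_vl t ht, S.eq_vl t ht]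
  have hxl' : EqOn xl' xl (Icc 0 T) := eq_of_has_deriv_right_eq
    (fun t ht => hvl' (Ico_subset_Icc_self ht) ▸
      (S'.deriv_xl t (Ico_subset_Icc_self ht)).hasDerivWithinAt)
    (fun t ht => (S.deriv_xl t (Ico_subset_Icc_self ht)).hasDerivWithinAt)
    S'.continuousOn_xl S.continuousOn_xl (by rw [S'.init_xl, S.init_xl])
  obtain ⟨ε, hε, R, hS⟩ := S.exists_mem_followerRegion hvl
  obtain ⟨ε', hε', R', hS'⟩ := S'.exists_mem_followerRegion (hvl.congr hvl')
  obtain ⟨K, hK⟩ := exists_lipschitzOnWith_vpidmField (vfree := vfree) (τ := τ) (s₀ := s₀)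
    (l := l) ha hb hδ (lt_min hε hε') (max R R')
  have hmem : ∀ t ∈ Icc 0 T, (x t, v t) ∈ followerRegion l (min ε ε') (max R R') (xl t) ∧
      (x' t, v' t) ∈ followerRegion l (min ε ε') (max R R') (xl t) := fun t ht => by
    have h' := (hS' t ht).1
    rw [hxl' ht] at h'
    exact ⟨followerRegion_mono (min_le_left _ _) (le_max_left _ _) (hS t ht).1,
      followerRegion_mono (min_le_right _ _) (le_max_right _ _) h'⟩
  have hderiv' : ∀ t ∈ Icc 0 T, HasDerivAt (fun t => (x' t, v' t))
      (vpidmField a b vfree τ s₀ l δ (xl t) (vl t) (x' t, v' t)) t := fun t ht => by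
    rw [← hxl' ht, ← hvl' ht]
    exact S'.hasDerivAt_prod ht
  have heq := ODE_solution_unique_of_mem_Icc_right (K := K)
    (v := fun t => vpidmField a b vfree τ s₀ l δ (xl t) (vl t))
    (s := fun t => followerRegion l (min ε ε') (max R R') (xl t))
    (fun t ht => hK _ _ (((hS t (Ico_subset_Icc_self ht)).2.1).trans (le_max_left _ _))
      (((hS t (Ico_subset_Icc_self ht)).2.2).trans (le_max_left _ _)))
    S'.continuousOn_prod (fun t ht => (hderiv' t (Ico_subset_Icc_self ht)).hasDerivWithinAt)
    (fun t ht => (hmem t (Ico_subset_Icc_self ht)).2)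
    S.continuousOn_prod (fun t ht => (S.hasDerivAt_prod (Ico_subset_Icc_self ht)).hasDerivWithinAt)
    (fun t ht => (hmem t (Ico_subset_Icc_self ht)).1)
    (by rw [S'.init_x, S'.init_v, S.init_x, S.init_v])
  intro t ht
  obtain ⟨hx, hv⟩ := Prod.mk.inj (heq ht)
  exact ⟨hx, hxl' ht, hv, hvl' ht⟩

end VPIDMSolution

end

theorem vpidm_wellposed_small_time_general
    (T a b vfree s₀ l δ τ : ℝ) (ulead : ℝ → ℝ) (x₀ xl₀ v₀ vl₀ : ℝ)
    (hT : 0 < T) (ha : 0 < a) (hb : 0 < b) (hδ : 1 < δ)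
    (hinit : x₀ < xl₀ - l)
    (hu : MemLp ulead ⊤ (volume.restrict (Ioo 0 T))) :
    ∃ Tstar ∈ Ioc (0:ℝ) T, ∃ x xl v vl : ℝ → ℝ,
      VPIDMSolution a b vfree τ s₀ l δ Tstar ulead x₀ xl₀ v₀ vl₀ x xl v vl ∧
      (∃ K : NNReal, LipschitzOnWith K x (Icc 0 Tstar) ∧
        LipschitzOnWith K v (Icc 0 Tstar)) ∧
      (∀ x' xl' v' vl' : ℝ → ℝ,
        VPIDMSolution a b vfree τ s₀ l δ Tstar ulead x₀ xl₀ v₀ vl₀ x' xl' v' vl' →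
        ∀ t ∈ Icc (0:ℝ) Tstar,
          x' t = x t ∧ xl' t = xl t ∧ v' t = v t ∧ vl' t = vl t) := by
  obtain ⟨xl, vl, hxl0, hvl0, hvl, hxl, hvl_eq⟩ := exists_leader_trajectory
    ((integrableOn_Ioc_iff_integrableOn_Ioo).2 (hu.integrable le_top)) xl₀ vl₀
  obtain ⟨T₁, hT₁, L, α, hα0, hαL, hα⟩ := exists_local_vpidm_trajectory (vfree := vfree)
    (τ := τ) (s₀ := s₀) (v₀ := v₀) ha hb hδ.le
    (continuous_iff_continuousAt.2 fun t => (hxl t).continuousAt) hvl (hxl0 ▸ hinit)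
  -- `[0, Tstar] ⊆ (-T₁, T₁)`, so the derivatives at both endpoints are two-sided.
  set Tstar := min (T₁ / 2) T
  have hTstar : Icc 0 Tstar ⊆ Ioo (-T₁) T₁ := fun t ht =>
    ⟨by linarith [ht.1], by linarith [ht.2, min_le_left (T₁ / 2) T]⟩
  have S : VPIDMSolution a b vfree τ s₀ l δ Tstar ulead x₀ xl₀ v₀ vl₀
      (fun t => (α t).1) xl (fun t => (α t).2) vl :=
    { init_x := by simp [hα0]
      init_xl := hxl0
      init_v := by simp [hα0]
      init_vl := hvl0
      gap_pos := fun t ht => (hα t (hTstar ht)).1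
      deriv_x := fun t ht => (hα t (hTstar ht)).2.fst
      deriv_xl := fun t _ => hxl t
      eq_vl := fun t ht => hvl_eq t ⟨ht.1, ht.2.trans (min_le_right _ _)⟩
      deriv_v := fun t ht => (hα t (hTstar ht)).2.snd }
  refine ⟨Tstar, ⟨lt_min (by positivity) hT, min_le_right _ _⟩, _, xl, _, vl, S,
    ⟨1 * L, (LipschitzWith.prod_fst.comp hαL).lipschitzOnWith,
      (LipschitzWith.prod_snd.comp hαL).lipschitzOnWith⟩,
    fun x' xl' v' vl' S' => S.unique ha hb hδ.le S' hvl.continuousOn⟩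

/-- **Existence and uniqueness for small times for the velocity projected IDM.**
On a sufficiently small time horizon `T* > 0` the velocity projected IDM admits
a unique solution `(x, v) ∈ W^{1,∞}((0,T*))²`. -/
theorem vpidm_wellposed_small_time
    (T a b vfree s₀ l δ τ : ℝ) (ulead : ℝ → ℝ) (x₀ xl₀ v₀ vl₀ : ℝ)
    (hT : 0 < T) (ha : 0 < a) (hb : 0 < b) (hvf : 0 < vfree)
    (hs₀ : 0 < s₀) (hl : 0 < l) (hτ : τ ∈ Ioo 0 T) (hδ : 1 < δ)
    (hinit : x₀ < xl₀ - l) (hv₀ : 0 ≤ v₀) (hvl₀ : 0 ≤ vl₀)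
    (hu : MemLp ulead ⊤ (volume.restrict (Ioo 0 T)))
    (hu' : ∀ t ∈ Icc (0:ℝ) T, 0 ≤ vl₀ + ∫ s in (0:ℝ)..t, ulead s) :
    ∃ Tstar ∈ Ioc (0:ℝ) T, ∃ x xl v vl : ℝ → ℝ,
      VPIDMSolution a b vfree τ s₀ l δ Tstar ulead x₀ xl₀ v₀ vl₀ x xl v vl ∧
      (∃ K : NNReal, LipschitzOnWith K x (Icc 0 Tstar) ∧
        LipschitzOnWith K v (Icc 0 Tstar)) ∧
      (∀ x' xl' v' vl' : ℝ → ℝ,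
        VPIDMSolution a b vfree τ s₀ l δ Tstar ulead x₀ xl₀ v₀ vl₀ x' xl' v' vl' →
        ∀ t ∈ Icc (0:ℝ) Tstar,
          x' t = x t ∧ xl' t = xl t ∧ v' t = v t ∧ vl' t = vl t) :=
  vpidm_wellposed_small_time_general T a b vfree s₀ l δ τ ulead x₀ xl₀ v₀ vl₀ hT ha hb hδ hinit hu
end

section
/- In the acceleration projected IDM, suppose the leader has the trajectory x_l(t) = x_l0 + v_l0·t + (1/2)·u·t² with u ≥ 0 and v_l0 > 0. Then for all t ∈ [0,T] the gap satisfies x_l(t) − x(t) − l ≤ (x_l0 − x₀ − l) + (v_l0 − v₀)·t + (1/2)·(u + a_min)·t². Consequently, if the follower's initial velocity v₀ is sufficiently large (in particular if v₀ > v_l0 and (v₀ − v_l0)² > 2·(u + a_min)·(x_l0 − x₀ − l)), there exists a time t > 0 with x_l(t) − x(t) < l, i.e. the model allows the follower to overtake the leader. -/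
/-!
The projection `max {·, -a_min}` caps the follower's deceleration at `a_min` whatever the gap, so
`v(t) ≥ v₀ - a_min t` and hence `x(t) ≥ x₀ + v₀ t - a_min t² / 2`. Subtracting this from the
leader's trajectory gives the gap bound, a quadratic in `t` whose value at its vertex
`t* = (v₀ - v_l0) / (u + a_min)` is `(x_l0 - x₀ - l) - (v₀ - v_l0)² / (2 (u + a_min)) < 0`.
-/

open Set

theorem le_of_hasDerivAt_le_hasDerivAt {f g f' g' : ℝ → ℝ} {a b : ℝ}
    (hf : ∀ t ∈ Icc a b, HasDerivAt f (f' t) t) (hg : ∀ t ∈ Icc a b, HasDerivAt g (g' t) t)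
    (hfg : g a ≤ f a) (hderiv : ∀ t ∈ Ico a b, g' t ≤ f' t) :
    ∀ t ∈ Icc a b, g t ≤ f t :=
  image_le_of_deriv_right_le_deriv_boundary
    (fun t ht => (hg t ht).continuousAt.continuousWithinAt)
    (fun t ht => (hg t (Ico_subset_Icc_self ht)).hasDerivWithinAt) hfg
    (fun t ht => (hf t ht).continuousAt.continuousWithinAt)
    (fun t ht => (hf t (Ico_subset_Icc_self ht)).hasDerivWithinAt) hderiv

section ConstantDeceleration

variable {T c : ℝ}

theorem sub_mul_le_of_neg_le_deriv {v w : ℝ → ℝ} (hv : ∀ t ∈ Icc 0 T, HasDerivAt v (w t) t)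
    (hw : ∀ t ∈ Icc 0 T, -c ≤ w t) : ∀ t ∈ Icc 0 T, v 0 - c * t ≤ v t :=
  le_of_hasDerivAt_le_hasDerivAt hv (g' := fun _ => -c)
    (fun t _ => by simpa using ((hasDerivAt_id t).const_mul c).const_sub (v 0)) (by simp)
    (fun t ht => hw t (Ico_subset_Icc_self ht))

theorem add_mul_sub_half_mul_sq_le_of_sub_mul_le_deriv {x w : ℝ → ℝ} {v₀ : ℝ}
    (hx : ∀ t ∈ Icc 0 T, HasDerivAt x (w t) t) (hw : ∀ t ∈ Icc 0 T, v₀ - c * t ≤ w t) :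
    ∀ t ∈ Icc 0 T, x 0 + v₀ * t - c / 2 * t ^ 2 ≤ x t := by
  refine le_of_hasDerivAt_le_hasDerivAt hx (g' := fun t => v₀ - c * t)
    (fun t _ => ?_) (by simp) (fun t ht => hw t (Ico_subset_Icc_self ht))
  exact ((((hasDerivAt_id' t).const_mul v₀).const_add (x 0)).fun_sub
    ((hasDerivAt_pow 2 t).const_mul (c / 2))).congr_deriv (by norm_num; ring)

end ConstantDeceleration

theorem sub_mul_div_add_half_mul_div_sq_neg {c d e : ℝ} (hc : 0 < c) (h : 2 * c * e < d ^ 2) :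
    e - d * (d / c) + 1 / 2 * c * (d / c) ^ 2 < 0 := by
  have hvertex : e - d * (d / c) + 1 / 2 * c * (d / c) ^ 2 = e - d ^ 2 / (2 * c) := by
    field_simp
    ring
  rw [hvertex, sub_neg, lt_div_iff₀ (by positivity)]
  linarith

theorem apidm_overtaking_general
    (T a b vfree s₀ l δ τ amin u : ℝ) (x₀ xl₀ v₀ vl₀ : ℝ) (x v : ℝ → ℝ)
    (hamin : 0 < amin) (hu : 0 ≤ u)
    (hx0 : x 0 = x₀) (hv0 : v 0 = v₀)
    (hx : ∀ t ∈ Icc (0:ℝ) T, HasDerivAt x (max (v t) 0) t)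
    (hv : ∀ t ∈ Icc (0:ℝ) T,
      HasDerivAt v
        (max (IDMAcc a b vfree τ s₀ l δ (x t) (max (v t) 0)
            (xl₀ + vl₀ * t + u / 2 * t ^ 2) (vl₀ + u * t)) (-amin)) t) :
    (∀ t ∈ Icc (0:ℝ) T,
      (xl₀ + vl₀ * t + u / 2 * t ^ 2) - x t - l ≤
        (xl₀ - x₀ - l) + (vl₀ - v₀) * t + (1 / 2) * (u + amin) * t ^ 2) ∧
    (vl₀ < v₀ → 2 * (u + amin) * (xl₀ - x₀ - l) < (v₀ - vl₀) ^ 2 →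
      (v₀ - vl₀) / (u + amin) ≤ T →
      ∃ t ∈ Ioc (0:ℝ) T, (xl₀ + vl₀ * t + u / 2 * t ^ 2) - x t < l) := by
  subst hx0 hv0
  have hvel := sub_mul_le_of_neg_le_deriv hv fun t _ => le_max_right _ _
  have hpos := add_mul_sub_half_mul_sq_le_of_sub_mul_le_deriv hx fun t ht =>
    (hvel t ht).trans (le_max_left _ _)
  have hgap : ∀ t ∈ Icc (0:ℝ) T, (xl₀ + vl₀ * t + u / 2 * t ^ 2) - x t - l ≤
      (xl₀ - x 0 - l) + (vl₀ - v 0) * t + (1 / 2) * (u + amin) * t ^ 2 := fun t ht => by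
    linarith [hpos t ht]
  refine ⟨hgap, fun hvl hdisc hT => ?_⟩
  have hc : 0 < u + amin := by linarith
  have ht : 0 < (v 0 - vl₀) / (u + amin) := div_pos (sub_pos.2 hvl) hc
  refine ⟨_, ⟨ht, hT⟩, ?_⟩
  linarith [hgap _ ⟨ht.le, hT⟩, sub_mul_div_add_half_mul_div_sq_neg hc hdisc]

/-- **Physical unreasonability of the acceleration projected IDM.**
Against the leader trajectory `x_l(t) = x_l0 + v_l0 t + (u/2) t²` (with
`u ≥ 0`, `v_l0 > 0`), the gap of the acceleration projected IDM satisfies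
`x_l(t) − x(t) − l ≤ (x_l0 − x₀ − l) + (v_l0 − v₀) t + ½ (u + a_min) t²`
on `[0,T]`; consequently, for `v₀` sufficiently large (if `v₀ > v_l0`,
`(v₀ − v_l0)² > 2 (u + a_min)(x_l0 − x₀ − l)` and the critical time
`(v₀ − v_l0)/(u + a_min)` lies in the horizon) there is a time `t > 0`
with `x_l(t) − x(t) < l`: the follower overtakes the leader. -/
theorem apidm_overtaking
    (T a b vfree s₀ l δ τ amin u : ℝ) (x₀ xl₀ v₀ vl₀ : ℝ) (x v : ℝ → ℝ)
    (hT : 0 < T) (ha : 0 < a) (hb : 0 < b) (hvf : 0 < vfree)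
    (hs₀ : 0 < s₀) (hl : 0 < l) (hτ : τ ∈ Ioo 0 T) (hδ : 1 < δ)
    (hamin : 0 < amin) (hu : 0 ≤ u) (hvl₀ : 0 < vl₀)
    (hx0 : x 0 = x₀) (hv0 : v 0 = v₀) (hv₀ : 0 ≤ v₀)
    (hx : ∀ t ∈ Icc (0:ℝ) T, HasDerivAt x (max (v t) 0) t)
    (hv : ∀ t ∈ Icc (0:ℝ) T,
      HasDerivAt v
        (max (IDMAcc a b vfree τ s₀ l δ (x t) (max (v t) 0)
            (xl₀ + vl₀ * t + u / 2 * t ^ 2) (vl₀ + u * t)) (-amin)) t) :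
    (∀ t ∈ Icc (0:ℝ) T,
      (xl₀ + vl₀ * t + u / 2 * t ^ 2) - x t - l ≤
        (xl₀ - x₀ - l) + (vl₀ - v₀) * t + (1 / 2) * (u + amin) * t ^ 2) ∧
    (vl₀ < v₀ → 2 * (u + amin) * (xl₀ - x₀ - l) < (v₀ - vl₀) ^ 2 →
      (v₀ - vl₀) / (u + amin) ≤ T →
      ∃ t ∈ Ioc (0:ℝ) T, (xl₀ + vl₀ * t + u / 2 * t ^ 2) - x t < l) :=
  apidm_overtaking_general T a b vfree s₀ l δ τ amin u x₀ xl₀ v₀ vl₀ x v hamin hu hx0 hv0 hx hv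
end
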